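/- arXiv:2509.10403 — 4 statements merged into one kernel-verified Lean document; each statement's English description precedes it below -/
import Mathlib

section
/- Let Ω be a proper subdomain of a metric space and C ≥ 1. Suppose Ω satisfies the C-Gehring–Hayman inequality and the C-ball separation condition, (Ω,k_Ω) is geodesic, and let x₀, y₀ ∈ Ω with σ(x₀,y₀) ≤ C·d_Ω(x₀). If d_Ω(y₀) > (1/(16(3+C)⁴))·σ(x₀,y₀) and for every quasihyperbolic geodesic γ_{x₀y₀} and every x ∈ γ_{x₀y₀} one has ℓ(γ_{x₀y₀}[y₀,x]) ≤ 2C⁴(1+C)·d_Ω(x), then k_Ω(x₀,y₀) < 50·C⁶·(3+C)². -/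
open Metric Set Real MeasureTheory

noncomputable section

variable {X : Type*} [MetricSpace X]

/-- Distance from `z` to the complement of `Ω`; for `z` in an open set `Ω` this is the
distance to the boundary `∂Ω`. -/
def distCompl (Ω : Set X) (z : X) : ℝ := Metric.infDist z Ωᶜ

/-- `γ` restricted to `[0, L]` is a unit-speed (arclength parametrized) rectifiable curve
with values in `Ω`. -/
structure IsUnitSpeedIn (Ω : Set X) (γ : ℝ → X) (L : ℝ) : Prop where
  nonneg : 0 ≤ L
  mem : ∀ t ∈ Set.Icc (0:ℝ) L, γ t ∈ Ω
  unitSpeed : ∀ s ∈ Set.Icc (0:ℝ) L, ∀ t ∈ Set.Icc (0:ℝ) L, s ≤ t →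
    eVariationOn γ (Set.Icc s t) = ENNReal.ofReal (t - s)

/-- Quasihyperbolic length `∫_γ |dz| / d_Ω(z)` of a unit-speed curve in `Ω`
parametrized on `[0, L]`. -/
def qhLength (Ω : Set X) (γ : ℝ → X) (L : ℝ) : ℝ :=
  ∫ s in (0:ℝ)..L, 1 / distCompl Ω (γ s)

/-- Quasihyperbolic distance in `Ω`: infimum of quasihyperbolic lengths of rectifiable
(unit-speed parametrized) curves in `Ω` joining the two points. -/
def qhDist (Ω : Set X) (x y : X) : ℝ :=
  ⨅ p : {p : (ℝ → X) × ℝ // IsUnitSpeedIn Ω p.1 p.2 ∧ p.1 0 = x ∧ p.1 p.2 = y},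
    qhLength Ω p.1.1 p.1.2

/-- Inner (intrinsic) distance in `Ω`: infimum of lengths of rectifiable curves in `Ω`
joining the two points. -/
def innerDist (Ω : Set X) (x y : X) : ℝ :=
  ⨅ p : {p : (ℝ → X) × ℝ // IsUnitSpeedIn Ω p.1 p.2 ∧ p.1 0 = x ∧ p.1 p.2 = y},
    p.1.2

/-- A quasihyperbolic geodesic: a unit-speed curve in `Ω` each of whose subarcs realizes
the quasihyperbolic distance between its endpoints. -/
def IsQHGeodesic (Ω : Set X) (γ : ℝ → X) (L : ℝ) : Prop :=
  IsUnitSpeedIn Ω γ L ∧ ∀ s ∈ Set.Icc (0:ℝ) L, ∀ t ∈ Set.Icc (0:ℝ) L, s ≤ t →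
    (∫ u in s..t, 1 / distCompl Ω (γ u)) = qhDist Ω (γ s) (γ t)

/-- `(Ω, k_Ω)` is a geodesic space: any two points of `Ω` are joined by a
quasihyperbolic geodesic. -/
def QHGeodesicSpace (Ω : Set X) : Prop :=
  ∀ x ∈ Ω, ∀ y ∈ Ω, ∃ γ L, IsQHGeodesic Ω γ L ∧ γ 0 = x ∧ γ L = y

/-- `(Ω, k_Ω)` is `δ`-Gromov hyperbolic: geodesic triangles for the quasihyperbolic
metric are `δ`-thin. -/
def QHGromovHyperbolic (Ω : Set X) (δ : ℝ) : Prop :=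
  ∀ γ₁ L₁ γ₂ L₂ γ₃ L₃, IsQHGeodesic Ω γ₁ L₁ → IsQHGeodesic Ω γ₂ L₂ →
    IsQHGeodesic Ω γ₃ L₃ → γ₂ 0 = γ₁ 0 → γ₃ 0 = γ₁ L₁ → γ₂ L₂ = γ₃ L₃ →
    ∀ s ∈ Set.Icc (0:ℝ) L₁, ∃ u ∈ γ₂ '' Set.Icc (0:ℝ) L₂ ∪ γ₃ '' Set.Icc (0:ℝ) L₃,
      qhDist Ω (γ₁ s) u ≤ δ

/-- The `C`-Gehring–Hayman inequality: every quasihyperbolic geodesic has length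
at most `C` times the inner distance between its endpoints. -/
def GehringHayman (Ω : Set X) (C : ℝ) : Prop :=
  ∀ γ L, IsQHGeodesic Ω γ L → L ≤ C * innerDist Ω (γ 0) (γ L)

/-- The `C`-ball separation condition: for each quasihyperbolic geodesic `γ`, each point
`z` on `γ` and each curve `α` in `Ω` with the same endpoints, the inner-metric ball
`B_σ(z, C·d_Ω(z))` meets `α`. -/
def BallSeparation (Ω : Set X) (C : ℝ) : Prop :=
  ∀ γ L, IsQHGeodesic Ω γ L → ∀ s ∈ Set.Icc (0:ℝ) L,
    ∀ α M, IsUnitSpeedIn Ω α M → α 0 = γ 0 → α M = γ L →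
      ∃ t ∈ Set.Icc (0:ℝ) M, innerDist Ω (γ s) (α t) < C * distCompl Ω (γ s)

/-- `X` is a length space: the distance between any two points is the infimum of lengths
of curves joining them. -/
def IsLengthSpace (X : Type*) [MetricSpace X] : Prop :=
  ∀ x y : X, ∀ ε > 0, ∃ γ : ℝ → X, ∃ L, IsUnitSpeedIn (Set.univ : Set X) γ L ∧
    γ 0 = x ∧ γ L = y ∧ L ≤ dist x y + ε

/-- `X` is `Q`-doubling: every `r/2`-separated subset of a ball of radius `r` has at
most `Q` points. -/
def QDoubling (X : Type*) [MetricSpace X] (Q : ℝ) : Prop :=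
  ∀ x : X, ∀ r : ℝ, ∀ S : Finset X, (↑S : Set X) ⊆ Metric.ball x r →
    (∀ a ∈ S, ∀ b ∈ S, a ≠ b → r / 2 ≤ dist a b) → (S.card : ℝ) ≤ Q

/-- `Ω` is a proper subdomain: a nonempty, open, connected set different from the whole
space. -/
def IsProperSubdomain (Ω : Set X) : Prop :=
  IsOpen Ω ∧ IsConnected Ω ∧ Ω ≠ Set.univ

/-- The `c₀`-LLC-2 condition: points of `Ω` outside a closed ball `B̄(x, r)` can be
joined by a curve in `Ω` outside `B̄(x, r/c₀)`. -/
def LLC2 (Ω : Set X) (c₀ : ℝ) : Prop :=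
  ∀ x : X, ∀ r : ℝ, ∀ a ∈ Ω \ Metric.closedBall x r, ∀ b ∈ Ω \ Metric.closedBall x r,
    ∃ γ L, IsUnitSpeedIn (Ω \ Metric.closedBall x (r / c₀)) γ L ∧ γ 0 = a ∧ γ L = b

/-! Near `y₀` the distance to the boundary is at least `d_Ω(y₀)/2`, and away from `y₀` the cone
condition bounds it below by the remaining length `ℓ(γ[y₀,x])/A`; together
`d_Ω(γ u) ≥ (L - u + d_Ω(y₀)/2) / (2A)`, whose reciprocal integrates to
`2A log(1 + 2L/d_Ω(y₀))`. Gehring–Hayman and the lower bound on `d_Ω(y₀)` make `L/d_Ω(y₀)` at most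
polynomial in `C`, so the logarithm is linear in `C`. -/

theorem IsUnitSpeedIn.dist_le {Ω : Set X} {γ : ℝ → X} {L : ℝ} (hγ : IsUnitSpeedIn Ω γ L)
    {s t : ℝ} (hs : s ∈ Icc 0 L) (ht : t ∈ Icc 0 L) (hst : s ≤ t) :
    dist (γ s) (γ t) ≤ t - s := by
  have h := eVariationOn.edist_le γ (s := Icc s t) ⟨le_rfl, hst⟩ ⟨hst, le_rfl⟩
  rw [hγ.unitSpeed s hs t ht hst, edist_dist] at h
  exact (ENNReal.ofReal_le_ofReal_iff (by linarith)).1 h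

theorem integral_one_div_le_of_cone {f : ℝ → ℝ} {L δ A : ℝ} (hL : 0 ≤ L) (hδ : 0 < δ)
    (hA : 1 ≤ A) (h_end : ∀ u ∈ Icc 0 L, δ ≤ f u + (L - u))
    (h_cone : ∀ u ∈ Icc 0 L, L - u ≤ A * f u) :
    ∫ u in (0:ℝ)..L, 1 / f u ≤ 2 * A * log (1 + 2 * L / δ) := by
  have h_lower : ∀ u ∈ Icc 0 L, 0 < L + δ / 2 - u ∧ L + δ / 2 - u ≤ 2 * A * f u := by
    intro u hu
    have h₁ := h_end u hu
    have h₂ := h_cone u hu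
    refine ⟨by linarith [hu.2], ?_⟩
    rcases le_total (L - u) (δ / 2) with h | h
    · nlinarith [hu.2]
    · linarith
  have h_pos : ∀ u ∈ Icc 0 L, 0 < f u := fun u hu =>
    pos_of_mul_pos_right ((h_lower u hu).1.trans_le (h_lower u hu).2) (by linarith)
  have h_pointwise : ∀ u ∈ Icc 0 L, 1 / f u ≤ 2 * A * (1 / (L + δ / 2 - u)) := by
    intro u hu
    obtain ⟨hpos, hle⟩ := h_lower u hu
    rw [mul_one_div, div_le_div_iff₀ (h_pos u hu) hpos, one_mul]
    linarith
  have h_cont : ContinuousOn (fun u => 2 * A * (1 / (L + δ / 2 - u))) (uIcc 0 L) := by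
    refine continuousOn_const.mul (continuousOn_const.div (by fun_prop) fun u hu => ?_)
    rw [uIcc_of_le hL] at hu
    exact (h_lower u hu).1.ne'
  calc ∫ u in (0:ℝ)..L, 1 / f u
      ≤ ∫ u in (0:ℝ)..L, 2 * A * (1 / (L + δ / 2 - u)) := by
        rw [intervalIntegral.integral_of_le hL, intervalIntegral.integral_of_le hL]
        refine setIntegral_mono_of_nonneg (fun u hu => ?_) (fun u hu => ?_)
          ((intervalIntegrable_iff_integrableOn_Ioc_of_le hL).1 h_cont.intervalIntegrable)
        · exact one_div_nonneg.2 (h_pos u (Ioc_subset_Icc_self hu)).le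
        · exact h_pointwise u (Ioc_subset_Icc_self hu)
    _ = 2 * A * log (1 + 2 * L / δ) := by
        rw [intervalIntegral.integral_const_mul,
          intervalIntegral.integral_comp_sub_left (fun x => 1 / x),
          integral_one_div_of_pos (by linarith) (by linarith), sub_zero, show L + δ / 2 - L = δ / 2 by ring]
        congr 2
        field_simp
        ring

theorem qhLength_le_of_cone {Ω : Set X} {γ : ℝ → X} {L A : ℝ} (hγ : IsUnitSpeedIn Ω γ L)
    (hA : 1 ≤ A) (h_end : 0 < distCompl Ω (γ L))
    (h_cone : ∀ s ∈ Icc 0 L, L - s ≤ A * distCompl Ω (γ s)) :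
    qhLength Ω γ L ≤ 2 * A * log (1 + 2 * L / distCompl Ω (γ L)) := by
  refine integral_one_div_le_of_cone hγ.nonneg h_end hA (fun u hu => ?_) h_cone
  calc distCompl Ω (γ L) ≤ distCompl Ω (γ u) + dist (γ L) (γ u) :=
        infDist_le_infDist_add_dist
    _ ≤ distCompl Ω (γ u) + (L - u) := by
        rw [dist_comm]
        gcongr
        exact hγ.dist_le hu ⟨hγ.nonneg, le_rfl⟩ hu.2

theorem log_one_add_mul_pow_le {C : ℝ} (hC : 1 ≤ C) :
    log (1 + 32 * C * (3 + C) ^ 4) ≤ 5 * C + 39 := by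
  have h_one : 1 ≤ C * (3 + C) ^ 4 := one_le_mul_of_one_le_of_one_le hC (one_le_pow₀ (by linarith))
  calc log (1 + 32 * C * (3 + C) ^ 4)
      ≤ log (33 * C * (3 + C) ^ 4) := log_le_log (by positivity) (by linarith)
    _ = log 33 + log C + 4 * log (3 + C) := by
        rw [log_mul (by positivity) (by positivity), log_mul (by positivity) (by positivity),
          log_pow]
        push_cast
        ring
    _ ≤ 32 + (C - 1) + 4 * (2 + C) := by
        gcongr
        · linarith [log_le_sub_one_of_pos (show (0:ℝ) < 33 by norm_num)]
        · exact log_le_sub_one_of_pos (by linarith)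
        · linarith [log_le_sub_one_of_pos (show (0:ℝ) < 3 + C by linarith)]
    _ = 5 * C + 39 := by ring

theorem mul_log_one_add_mul_pow_lt {C : ℝ} (hC : 1 ≤ C) :
    2 * (2 * C ^ 4 * (1 + C)) * log (1 + 32 * C * (3 + C) ^ 4) < 50 * C ^ 6 * (3 + C) ^ 2 := by
  have hC4 : 0 < C ^ 4 := by positivity
  calc 2 * (2 * C ^ 4 * (1 + C)) * log (1 + 32 * C * (3 + C) ^ 4)
      ≤ 2 * (2 * C ^ 4 * (1 + C)) * (5 * C + 39) := by gcongr; exact log_one_add_mul_pow_le hC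
    _ = C ^ 4 * (20 * C ^ 2 + 176 * C + 156) := by ring
    _ < C ^ 4 * (50 * C ^ 2 * (3 + C) ^ 2) := by gcongr; nlinarith
    _ = 50 * C ^ 6 * (3 + C) ^ 2 := by ring

theorem qhDist_small_of_cone_general (Ω : Set X)
    (C : ℝ) (hC : 1 ≤ C) (hGeo : QHGeodesicSpace Ω)
    (hGH : GehringHayman Ω C)
    (x₀ y₀ : X) (hx₀ : x₀ ∈ Ω) (hy₀ : y₀ ∈ Ω)
    (h2 : (1 / (16 * (3 + C) ^ 4)) * innerDist Ω x₀ y₀ < distCompl Ω y₀)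
    (h3 : ∀ γ : ℝ → X, ∀ L : ℝ, IsQHGeodesic Ω γ L → γ 0 = x₀ → γ L = y₀ →
      ∀ s ∈ Set.Icc (0:ℝ) L, L - s ≤ 2 * C ^ 4 * (1 + C) * distCompl Ω (γ s)) :
    qhDist Ω x₀ y₀ < 50 * C ^ 6 * (3 + C) ^ 2 := by
  obtain ⟨γ, L, hγ, rfl, rfl⟩ := hGeo x₀ hx₀ y₀ hy₀
  have hL : 0 ≤ L := hγ.1.nonneg
  have hσ : 0 ≤ innerDist Ω (γ 0) (γ L) := Real.iInf_nonneg fun p => p.2.1.nonneg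
  have hδ : 0 < distCompl Ω (γ L) := lt_of_le_of_lt (by positivity) h2
  rw [one_div, inv_mul_lt_iff₀ (by positivity)] at h2
  have h_ratio : 2 * L / distCompl Ω (γ L) < 32 * C * (3 + C) ^ 4 := by
    rw [div_lt_iff₀ hδ]
    nlinarith [hGH γ L hγ]
  have hA : 1 ≤ 2 * C ^ 4 * (1 + C) := by nlinarith [one_le_pow₀ (n := 4) hC]
  calc qhDist Ω (γ 0) (γ L) = qhLength Ω γ L := (hγ.2 0 ⟨le_rfl, hL⟩ L ⟨hL, le_rfl⟩ hL).symm
    _ ≤ 2 * (2 * C ^ 4 * (1 + C)) * log (1 + 2 * L / distCompl Ω (γ L)) :=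
        qhLength_le_of_cone hγ.1 hA hδ (h3 γ L hγ rfl rfl)
    _ ≤ 2 * (2 * C ^ 4 * (1 + C)) * log (1 + 32 * C * (3 + C) ^ 4) := by
        gcongr
    _ < 50 * C ^ 6 * (3 + C) ^ 2 := mul_log_one_add_mul_pow_lt hC

/-- Step 2 of the proof of Theorem 1.6: if `σ(x₀,y₀) ≤ C·d_Ω(x₀)`,
`d_Ω(y₀)` is not too small, and every quasihyperbolic geodesic from `x₀` to `y₀`
satisfies the cone condition `ℓ(γ[y₀,x]) ≤ 2C⁴(1+C)·d_Ω(x)`, then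
`k_Ω(x₀, y₀) < 50·C⁶·(3+C)²`. -/
theorem qhDist_small_of_cone (Ω : Set X) (hΩ : IsProperSubdomain Ω)
    (C : ℝ) (hC : 1 ≤ C) (hGeo : QHGeodesicSpace Ω)
    (hGH : GehringHayman Ω C) (hBS : BallSeparation Ω C)
    (x₀ y₀ : X) (hx₀ : x₀ ∈ Ω) (hy₀ : y₀ ∈ Ω)
    (h1 : innerDist Ω x₀ y₀ ≤ C * distCompl Ω x₀)
    (h2 : (1 / (16 * (3 + C) ^ 4)) * innerDist Ω x₀ y₀ < distCompl Ω y₀)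
    (h3 : ∀ γ : ℝ → X, ∀ L : ℝ, IsQHGeodesic Ω γ L → γ 0 = x₀ → γ L = y₀ →
      ∀ s ∈ Set.Icc (0:ℝ) L, L - s ≤ 2 * C ^ 4 * (1 + C) * distCompl Ω (γ s)) :
    qhDist Ω x₀ y₀ < 50 * C ^ 6 * (3 + C) ^ 2 :=
  qhDist_small_of_cone_general Ω C hC hGeo hGH x₀ y₀ hx₀ hy₀ h2 h3
end
end

section
/- Let Ω be a proper subdomain with (Ω,k_Ω) C-Gromov hyperbolic geodesic, C ≥ 8. Fix x,y ∈ Ω, a quasihyperbolic geodesic γ_{xy} with x₀ ∈ γ_{xy}, a curve α from x to y, and θ > 1+C. Suppose z ∈ α and γ is a quasihyperbolic geodesic from x to z containing z₀ with k_Ω(x₀,z₀) = k_Ω(x₀,γ) ≥ θ, and suppose that for every w in the subarc α(z,y] and every quasihyperbolic geodesic γ_{xw} one has k_Ω(x₀,γ_{xw}) < θ. Then θ ≤ k_Ω(x₀,z₀) < 1 + θ + C. -/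
open Metric Set Real MeasureTheory

noncomputable section

variable {X : Type*} [MetricSpace X]

/-!
If `z = α tz` is not the endpoint `y`, pick `t > tz` with `k_Ω(α t, z) ≤ 1`. By hypothesis a
geodesic `γ_{x, α t}` passes within `θ` of `x₀`, and thinness of the triangle formed by
`γ_{x, α t}`, `γ_{xz}` and a geodesic `[α t, z]` puts that point within `C` of `γ_{xz}` or of
the short side `[α t, z]`. Either way minimality of `z₀` on `γ_{xz}` gives
`k_Ω(x₀, z₀) < θ + C + 1`. If `z = y`, thinness of the degenerate triangle with sides `γ_{xy}`
and `γ_{xz}` puts `x₀` within `C < θ` of `γ_{xz}`, which is impossible.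
-/

lemma eVariationOn_Icc_eq_of_split {E : Type*} [PseudoEMetricSpace E] {a m b : ℝ}
    {f : ℝ → E}
    (hleft : ∀ s t, a ≤ s → s ≤ t → t ≤ m → eVariationOn f (Icc s t) = ENNReal.ofReal (t - s))
    (hright : ∀ s t, m ≤ s → s ≤ t → t ≤ b → eVariationOn f (Icc s t) = ENNReal.ofReal (t - s))
    {s t : ℝ} (has : a ≤ s) (hst : s ≤ t) (htb : t ≤ b) :
    eVariationOn f (Icc s t) = ENNReal.ofReal (t - s) := by
  rcases le_total t m with htm | hmt
  · exact hleft s t has hst htm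
  rcases le_total m s with hms | hsm
  · exact hright s t hms hst htb
  have hsplit := eVariationOn.Icc_add_Icc f (s := Icc s t) hsm hmt ⟨hsm, hmt⟩
  rw [Icc_inter_Icc, sup_idem, inf_eq_right.mpr hmt, Icc_inter_Icc, inf_idem,
    sup_eq_right.mpr hsm, inter_self] at hsplit
  rw [← hsplit, hleft s m has hsm le_rfl, hright m t le_rfl hmt htb,
    ← ENNReal.ofReal_add (by linarith) (by linarith)]
  ring_nf

def concatCurve {Y : Type*} (γ₁ : ℝ → Y) (L₁ : ℝ) (γ₂ : ℝ → Y) (s : ℝ) : Y :=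
  if s ≤ L₁ then γ₁ s else γ₂ (s - L₁)

section Concatenation

variable {Y : Type*} {γ₁ γ₂ : ℝ → Y} {L₁ s : ℝ}

lemma concatCurve_of_le (hs : s ≤ L₁) : concatCurve γ₁ L₁ γ₂ s = γ₁ s := if_pos hs

lemma concatCurve_of_ge (hj : γ₁ L₁ = γ₂ 0) (hs : L₁ ≤ s) :
    concatCurve γ₁ L₁ γ₂ s = γ₂ (s - L₁) := by
  rcases hs.lt_or_eq with hs | rfl
  · exact if_neg hs.not_ge
  · rw [concatCurve_of_le le_rfl, hj, sub_self]

end Concatenation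

section QuasihyperbolicDistance

variable {Ω : Set X} {γ γ₁ γ₂ σ : ℝ → X} {L L₁ L₂ : ℝ}

lemma IsUnitSpeedIn.lipschitzOnWith (h : IsUnitSpeedIn Ω γ L) :
    LipschitzOnWith 1 γ (Icc 0 L) := by
  intro s hs t ht
  wlog hst : s ≤ t generalizing s t
  · rw [edist_comm, edist_comm (s : ℝ) t]; exact this ht hs (le_of_not_ge hst)
  calc edist (γ s) (γ t) ≤ eVariationOn γ (Icc s t) :=
        eVariationOn.edist_le γ (left_mem_Icc.2 hst) (right_mem_Icc.2 hst)
    _ = ENNReal.ofReal (t - s) := h.unitSpeed s hs t ht hst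
    _ ≤ 1 * edist s t := by
        rw [one_mul, edist_dist, Real.dist_eq, abs_sub_comm]
        exact ENNReal.ofReal_le_ofReal (le_abs_self _)

lemma IsUnitSpeedIn.continuousOn_qhIntegrand (hΩ : IsOpen Ω) (h : IsUnitSpeedIn Ω γ L) :
    ContinuousOn (fun s => 1 / distCompl Ω (γ s)) (Icc 0 L) := by
  rcases Ωᶜ.eq_empty_or_nonempty with hcompl | hcompl
  · simpa [distCompl, hcompl] using continuousOn_const
  refine continuousOn_const.div
    ((continuous_infDist_pt _).comp_continuousOn h.lipschitzOnWith.continuousOn) fun s hs => ?_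
  exact ((hΩ.isClosed_compl.notMem_iff_infDist_pos hcompl).1 (by simpa using h.mem s hs)).ne'

lemma IsUnitSpeedIn.intervalIntegrable_qhIntegrand (hΩ : IsOpen Ω) (h : IsUnitSpeedIn Ω γ L)
    {a b : ℝ} (ha : 0 ≤ a) (hab : a ≤ b) (hb : b ≤ L) :
    IntervalIntegrable (fun s => 1 / distCompl Ω (γ s)) volume a b :=
  ((h.continuousOn_qhIntegrand hΩ).mono (Icc_subset_Icc ha hb)).intervalIntegrable_of_Icc hab

lemma qhIntegrand_nonneg (z : X) : 0 ≤ 1 / distCompl Ω z :=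
  div_nonneg zero_le_one infDist_nonneg

lemma qhLength_nonneg (hL : 0 ≤ L) : 0 ≤ qhLength Ω γ L :=
  intervalIntegral.integral_nonneg hL fun _ _ => qhIntegrand_nonneg _

lemma qhLength_le_mul {B : ℝ} (hL : 0 ≤ L)
    (hB : ∀ s ∈ Icc 0 L, 1 / distCompl Ω (γ s) ≤ B) : qhLength Ω γ L ≤ B * L := by
  have hnorm := intervalIntegral.norm_integral_le_of_norm_le_const (a := 0) (b := L)
    (f := fun s => 1 / distCompl Ω (γ s)) fun s hs => by
      rw [uIoc_of_le hL] at hs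
      rw [Real.norm_of_nonneg (qhIntegrand_nonneg _)]
      exact hB s (Ioc_subset_Icc_self hs)
  rw [sub_zero, abs_of_nonneg hL] at hnorm
  exact (le_abs_self _).trans hnorm

lemma qhDist_le_qhLength (h : IsUnitSpeedIn Ω γ L) :
    qhDist Ω (γ 0) (γ L) ≤ qhLength Ω γ L := by
  refine ciInf_le (f := fun p : {p : (ℝ → X) × ℝ //
    IsUnitSpeedIn Ω p.1 p.2 ∧ p.1 0 = γ 0 ∧ p.1 p.2 = γ L} => qhLength Ω p.1.1 p.1.2) ?_
    ⟨(γ, L), h, rfl, rfl⟩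
  refine ⟨0, ?_⟩
  rintro _ ⟨p, rfl⟩
  exact qhLength_nonneg p.2.1.nonneg

lemma qhDist_nonneg (h : IsUnitSpeedIn Ω γ L) : 0 ≤ qhDist Ω (γ 0) (γ L) :=
  have : Nonempty {p : (ℝ → X) × ℝ //
      IsUnitSpeedIn Ω p.1 p.2 ∧ p.1 0 = γ 0 ∧ p.1 p.2 = γ L} := ⟨⟨(γ, L), h, rfl, rfl⟩⟩
  le_ciInf fun p => qhLength_nonneg p.2.1.nonneg

lemma IsUnitSpeedIn.concat (h₁ : IsUnitSpeedIn Ω γ₁ L₁) (h₂ : IsUnitSpeedIn Ω γ₂ L₂)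
    (hj : γ₁ L₁ = γ₂ 0) : IsUnitSpeedIn Ω (concatCurve γ₁ L₁ γ₂) (L₁ + L₂) := by
  have hL₁ := h₁.nonneg
  have hL₂ := h₂.nonneg
  refine ⟨by linarith, fun t ht => ?_, fun s hs t ht hst => ?_⟩
  · rcases le_total t L₁ with htL | hLt
    · rw [concatCurve_of_le htL]; exact h₁.mem t ⟨ht.1, htL⟩
    · rw [concatCurve_of_ge hj hLt]; exact h₂.mem (t - L₁) ⟨by linarith, by linarith [ht.2]⟩
  refine eVariationOn_Icc_eq_of_split (m := L₁) (fun s t hs hst ht => ?_)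
    (fun s t hs hst ht => ?_) hs.1 hst ht.2
  · rw [eVariationOn.eq_of_eqOn fun r hr => concatCurve_of_le (hr.2.trans ht)]
    exact h₁.unitSpeed s ⟨hs, hst.trans ht⟩ t ⟨hs.trans hst, ht⟩ hst
  · rw [eVariationOn.eq_of_eqOn fun r hr => concatCurve_of_ge hj (hs.trans hr.1),
      show (fun r => γ₂ (r - L₁)) = γ₂ ∘ (· - L₁) from rfl,
      eVariationOn.comp_eq_of_monotoneOn γ₂ _ fun u _ v _ huv => sub_le_sub_right huv L₁,
      image_sub_const_Icc,
      h₂.unitSpeed _ ⟨by linarith, by linarith⟩ _ ⟨by linarith, by linarith⟩ (by linarith)]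
    ring_nf

lemma qhLength_concat (hΩ : IsOpen Ω) (h₁ : IsUnitSpeedIn Ω γ₁ L₁)
    (h₂ : IsUnitSpeedIn Ω γ₂ L₂) (hj : γ₁ L₁ = γ₂ 0) :
    qhLength Ω (concatCurve γ₁ L₁ γ₂) (L₁ + L₂) = qhLength Ω γ₁ L₁ + qhLength Ω γ₂ L₂ := by
  have hL₁ := h₁.nonneg
  have hL₂ := h₂.nonneg
  have h := h₁.concat h₂ hj
  rw [qhLength, ← intervalIntegral.integral_add_adjacent_intervals
    (h.intervalIntegrable_qhIntegrand hΩ le_rfl hL₁ (by linarith))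
    (h.intervalIntegrable_qhIntegrand hΩ hL₁ (by linarith) le_rfl)]
  congr 1
  · refine intervalIntegral.integral_congr fun r hr => ?_
    rw [uIcc_of_le hL₁] at hr
    simp only [concatCurve_of_le hr.2]
  · rw [intervalIntegral.integral_congr (g := fun r => 1 / distCompl Ω (γ₂ (r - L₁)))
      fun r hr => by
        rw [uIcc_of_le (by linarith)] at hr
        simp only [concatCurve_of_ge hj hr.1],
      intervalIntegral.integral_comp_sub_right (fun r => 1 / distCompl Ω (γ₂ r)), sub_self,
      add_sub_cancel_left, qhLength]

lemma qhDist_triangle (hΩ : IsOpen Ω) (hGeo : QHGeodesicSpace Ω) {a b c : X} (ha : a ∈ Ω)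
    (hb : b ∈ Ω) (hc : c ∈ Ω) : qhDist Ω a c ≤ qhDist Ω a b + qhDist Ω b c := by
  have hcurves : ∀ p ∈ Ω, ∀ q ∈ Ω, Nonempty {r : (ℝ → X) × ℝ //
      IsUnitSpeedIn Ω r.1 r.2 ∧ r.1 0 = p ∧ r.1 r.2 = q} := fun p hp q hq => by
    obtain ⟨γ, L, hγ, h0, hL⟩ := hGeo p hp q hq
    exact ⟨⟨(γ, L), hγ.1, h0, hL⟩⟩
  have := hcurves a ha b hb
  have := hcurves b hb c hc
  refine le_ciInf_add_ciInf ?_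
  rintro ⟨⟨γ₁, L₁⟩, h₁, rfl, rfl⟩ ⟨⟨γ₂, L₂⟩, h₂, hj, rfl⟩
  have h := h₁.concat h₂ hj.symm
  have hend₀ : concatCurve γ₁ L₁ γ₂ 0 = γ₁ 0 := concatCurve_of_le h₁.nonneg
  have hend₁ : concatCurve γ₁ L₁ γ₂ (L₁ + L₂) = γ₂ L₂ := by
    rw [concatCurve_of_ge hj.symm (by linarith [h₂.nonneg]), add_sub_cancel_left]
  calc qhDist Ω (γ₁ 0) (γ₂ L₂) ≤ qhLength Ω (concatCurve γ₁ L₁ γ₂) (L₁ + L₂) := by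
        simpa only [hend₀, hend₁] using qhDist_le_qhLength h
    _ = qhLength Ω γ₁ L₁ + qhLength Ω γ₂ L₂ := qhLength_concat hΩ h₁ h₂ hj.symm

lemma isUnitSpeedIn_const {y : X} (hy : y ∈ Ω) : IsUnitSpeedIn Ω (fun _ => y) 0 := by
  refine ⟨le_rfl, fun _ _ => hy, fun s hs t ht _ => ?_⟩
  obtain rfl : s = 0 := le_antisymm hs.2 hs.1
  obtain rfl : t = 0 := le_antisymm ht.2 ht.1
  simp

lemma qhDist_self {y : X} (hy : y ∈ Ω) : qhDist Ω y y = 0 :=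
  le_antisymm (by simpa [qhLength] using qhDist_le_qhLength (isUnitSpeedIn_const hy))
    (qhDist_nonneg (isUnitSpeedIn_const hy))

lemma isQHGeodesic_const {y : X} (hy : y ∈ Ω) : IsQHGeodesic Ω (fun _ => y) 0 := by
  refine ⟨isUnitSpeedIn_const hy, fun s hs t ht _ => ?_⟩
  obtain rfl : s = 0 := le_antisymm hs.2 hs.1
  obtain rfl : t = 0 := le_antisymm ht.2 ht.1
  rw [intervalIntegral.integral_same, qhDist_self hy]

lemma IsUnitSpeedIn.reverse_subarc {a b : ℝ} (h : IsUnitSpeedIn Ω γ L)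
    (ha : 0 ≤ a) (hab : a ≤ b) (hb : b ≤ L) :
    IsUnitSpeedIn Ω (fun s => γ (b - s)) (b - a) := by
  refine ⟨by linarith, fun t ht => h.mem (b - t) ⟨by linarith [ht.2], by linarith [ht.1]⟩,
    fun s hs t ht hst => ?_⟩
  rw [show (fun s => γ (b - s)) = γ ∘ (b - ·) from rfl,
    eVariationOn.comp_eq_of_antitoneOn γ _ fun u _ v _ huv => sub_le_sub_left huv b,
    image_const_sub_Icc, h.unitSpeed (b - t) ⟨by linarith [ht.2], by linarith [ht.1]⟩ (b - s)
      ⟨by linarith [hs.2], by linarith [hs.1]⟩ (by linarith)]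
  ring_nf

lemma IsUnitSpeedIn.exists_qhDist_le (hΩ : IsOpen Ω) {a ε : ℝ}
    (h : IsUnitSpeedIn Ω γ L) (ha : a ∈ Ico 0 L) (hε : 0 < ε) :
    ∃ t ∈ Ioc a L, qhDist Ω (γ t) (γ a) ≤ ε := by
  obtain ⟨B, hB⟩ := isCompact_Icc.bddAbove_image (h.continuousOn_qhIntegrand hΩ)
  have hB₀ : 0 ≤ B := (qhIntegrand_nonneg _).trans (hB (mem_image_of_mem _ ⟨ha.1, ha.2.le⟩))
  have hδ : 0 < ε / (B + 1) := by positivity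
  set t := min L (a + ε / (B + 1))
  have hat : a < t := lt_min ha.2 (by linarith)
  have htL : t ≤ L := min_le_left _ _
  refine ⟨t, ⟨hat, htL⟩, ?_⟩
  have hrev := h.reverse_subarc ha.1 hat.le htL
  calc qhDist Ω (γ t) (γ a) ≤ qhLength Ω (fun s => γ (t - s)) (t - a) := by
        simpa using qhDist_le_qhLength hrev
    _ ≤ (B + 1) * (t - a) := qhLength_le_mul hrev.nonneg fun s hs =>
        (hB (mem_image_of_mem _ ⟨by linarith [hs.2, ha.1], by linarith [hs.1]⟩)).trans
          (by linarith)
    _ ≤ (B + 1) * (ε / (B + 1)) := by gcongr; linarith [min_le_right L (a + ε / (B + 1))]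
    _ = ε := by field_simp

lemma IsQHGeodesic.qhDist_tail_le (hΩ : IsOpen Ω) {r : ℝ}
    (hσ : IsQHGeodesic Ω σ L) (hr : r ∈ Icc 0 L) :
    qhDist Ω (σ r) (σ L) ≤ qhDist Ω (σ 0) (σ L) := by
  have hL := hσ.1.nonneg
  rw [← hσ.2 r hr L (right_mem_Icc.2 hL) hr.2,
    ← hσ.2 0 (left_mem_Icc.2 hL) L (right_mem_Icc.2 hL) hL]
  exact intervalIntegral.integral_mono_interval hr.1 hr.2 le_rfl
    (Filter.Eventually.of_forall fun _ => qhIntegrand_nonneg _)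
    (hσ.1.intervalIntegrable_qhIntegrand hΩ le_rfl hL le_rfl)

lemma qhDist_le_of_close_to_union (hΩ : IsOpen Ω) (hGeo : QHGeodesicSpace Ω) {x₀ p w : X}
    (hx₀ : x₀ ∈ Ω) (hp : p ∈ Ω) {g : ℝ → X} {Lg Lσ u C ε : ℝ} (hg : IsQHGeodesic Ω g Lg)
    (hσ : IsQHGeodesic Ω σ Lσ) (hσg : σ Lσ = g Lg)
    (hmin : ∀ v ∈ Icc 0 Lg, qhDist Ω x₀ (g u) ≤ qhDist Ω x₀ (g v))
    (hw : w ∈ g '' Icc 0 Lg ∪ σ '' Icc 0 Lσ) (hpw : qhDist Ω p w ≤ C)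
    (hσε : qhDist Ω (σ 0) (σ Lσ) ≤ ε) :
    qhDist Ω x₀ (g u) ≤ qhDist Ω x₀ p + C + ε := by
  rcases hw with ⟨r, hr, rfl⟩ | ⟨r, hr, rfl⟩
  · have hε : 0 ≤ ε := (qhDist_nonneg hσ.1).trans hσε
    calc qhDist Ω x₀ (g u) ≤ qhDist Ω x₀ (g r) := hmin r hr
      _ ≤ qhDist Ω x₀ p + qhDist Ω p (g r) := qhDist_triangle hΩ hGeo hx₀ hp (hg.1.mem r hr)
      _ ≤ qhDist Ω x₀ p + C + ε := by linarith
  · have hσr := hσ.1.mem r hr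
    calc qhDist Ω x₀ (g u) ≤ qhDist Ω x₀ (σ Lσ) := hσg ▸ hmin Lg (right_mem_Icc.2 hg.1.nonneg)
      _ ≤ qhDist Ω x₀ (σ r) + qhDist Ω (σ r) (σ Lσ) :=
        qhDist_triangle hΩ hGeo hx₀ hσr (hσ.1.mem _ (right_mem_Icc.2 hσ.1.nonneg))
      _ ≤ qhDist Ω x₀ p + qhDist Ω p (σ r) + qhDist Ω (σ r) (σ Lσ) := by
        gcongr; exact qhDist_triangle hΩ hGeo hx₀ hp hσr
      _ ≤ qhDist Ω x₀ p + C + ε := by linarith [hσ.qhDist_tail_le hΩ hr]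

end QuasihyperbolicDistance

theorem class_P_distance_bound_general (Ω : Set X) (hΩ : IsProperSubdomain Ω)
    (C : ℝ) (hGeo : QHGeodesicSpace Ω) (hHyp : QHGromovHyperbolic Ω C)
    (x y : X) (hx : x ∈ Ω) (hy : y ∈ Ω)
    (γ : ℝ → X) (L : ℝ) (hγ : IsQHGeodesic Ω γ L) (hγ0 : γ 0 = x) (hγL : γ L = y)
    (s₀ : ℝ) (hs₀ : s₀ ∈ Set.Icc (0:ℝ) L)
    (α : ℝ → X) (M : ℝ) (hα : IsUnitSpeedIn Ω α M) (hαM : α M = y)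
    (θ : ℝ) (hθ : 1 + C < θ)
    (tz : ℝ) (htz : tz ∈ Set.Icc (0:ℝ) M)
    (g : ℝ → X) (Lg : ℝ) (hg : IsQHGeodesic Ω g Lg)
    (hg0 : g 0 = x) (hgL : g Lg = α tz)
    (u : ℝ)
    (hge : θ ≤ qhDist Ω (γ s₀) (g u))
    (hmin : ∀ v ∈ Set.Icc (0:ℝ) Lg, qhDist Ω (γ s₀) (g u) ≤ qhDist Ω (γ s₀) (g v))
    (hlast : ∀ t ∈ Set.Ioc tz M, ∀ h : ℝ → X, ∀ Lh : ℝ, IsQHGeodesic Ω h Lh →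
      h 0 = x → h Lh = α t →
      ∃ v ∈ Set.Icc (0:ℝ) Lh, qhDist Ω (γ s₀) (h v) < θ) :
    θ ≤ qhDist Ω (γ s₀) (g u) ∧ qhDist Ω (γ s₀) (g u) < 1 + θ + C := by
  have hΩo := hΩ.1
  have hx₀ : γ s₀ ∈ Ω := hγ.1.mem s₀ hs₀
  refine ⟨hge, ?_⟩
  rcases htz.2.lt_or_eq with htzM | rfl
  · obtain ⟨t, ⟨htzt, htM⟩, hshort⟩ := hα.exists_qhDist_le hΩo ⟨htz.1, htzM⟩ one_pos
    have hαt : α t ∈ Ω := hα.mem t ⟨htz.1.trans htzt.le, htM⟩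
    obtain ⟨h, Lh, hh, hh0, hhL⟩ := hGeo x hx (α t) hαt
    obtain ⟨v, hv, hvθ⟩ := hlast t ⟨htzt, htM⟩ h Lh hh hh0 hhL
    obtain ⟨σ, Lσ, hσ, hσ0, hσL⟩ := hGeo (α t) hαt (α tz) (hα.mem tz htz)
    obtain ⟨w, hw, hvw⟩ := hHyp h Lh g Lg σ Lσ hh hg hσ (hg0.trans hh0.symm)
      (hσ0.trans hhL.symm) (hgL.trans hσL.symm) v hv
    have := qhDist_le_of_close_to_union hΩo hGeo hx₀ (hh.1.mem v hv) hg hσ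
      (hσL.trans hgL.symm) hmin hw hvw (hσ0 ▸ hσL ▸ hshort)
    linarith
  · have hgy : g Lg = y := hgL.trans hαM
    obtain ⟨w, hw, hx₀w⟩ := hHyp γ L g Lg (fun _ => y) 0 hγ hg (isQHGeodesic_const hy)
      (hg0.trans hγ0.symm) hγL.symm hgy s₀ hs₀
    have := qhDist_le_of_close_to_union hΩo hGeo hx₀ hx₀ hg (isQHGeodesic_const hy)
      hgy.symm hmin hw hx₀w (qhDist_self hy).le
    rw [qhDist_self hx₀] at this
    linarith

/-- Lemma 4.3: for a curve of the class `P_α^{γ_{xx₀y}}(θ)`, the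
distinguished point `z₀` satisfies `θ ≤ k_Ω(x₀, z₀) < 1 + θ + C`. -/
theorem class_P_distance_bound (Ω : Set X) (hΩ : IsProperSubdomain Ω)
    (C : ℝ) (hC : 8 ≤ C) (hGeo : QHGeodesicSpace Ω) (hHyp : QHGromovHyperbolic Ω C)
    (x y : X) (hx : x ∈ Ω) (hy : y ∈ Ω)
    (γ : ℝ → X) (L : ℝ) (hγ : IsQHGeodesic Ω γ L) (hγ0 : γ 0 = x) (hγL : γ L = y)
    (s₀ : ℝ) (hs₀ : s₀ ∈ Set.Icc (0:ℝ) L)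
    (α : ℝ → X) (M : ℝ) (hα : IsUnitSpeedIn Ω α M) (hα0 : α 0 = x) (hαM : α M = y)
    (θ : ℝ) (hθ : 1 + C < θ)
    (tz : ℝ) (htz : tz ∈ Set.Icc (0:ℝ) M)
    (g : ℝ → X) (Lg : ℝ) (hg : IsQHGeodesic Ω g Lg)
    (hg0 : g 0 = x) (hgL : g Lg = α tz)
    (u : ℝ) (hu : u ∈ Set.Icc (0:ℝ) Lg)
    (hge : θ ≤ qhDist Ω (γ s₀) (g u))
    (hmin : ∀ v ∈ Set.Icc (0:ℝ) Lg, qhDist Ω (γ s₀) (g u) ≤ qhDist Ω (γ s₀) (g v))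
    (hlast : ∀ t ∈ Set.Ioc tz M, ∀ h : ℝ → X, ∀ Lh : ℝ, IsQHGeodesic Ω h Lh →
      h 0 = x → h Lh = α t →
      ∃ v ∈ Set.Icc (0:ℝ) Lh, qhDist Ω (γ s₀) (h v) < θ) :
    θ ≤ qhDist Ω (γ s₀) (g u) ∧ qhDist Ω (γ s₀) (g u) < 1 + θ + C :=
  class_P_distance_bound_general Ω hΩ C hGeo hHyp x y hx hy γ L hγ hγ0 hγL s₀ hs₀ α M hα hαM θ hθ tz
    htz g Lg hg hg0 hgL u hge hmin hlast
end
end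

section
/- Let (X,d) be a Q-doubling length space, Ω ⊊ X a proper subdomain, and β a quasihyperbolic geodesic in Ω from x to y. Suppose x₀ ∈ β satisfies d_Ω(x₀) = sup_{w∈β} d_Ω(w), and suppose there is μ₁ ≥ 1 such that d(x,z) ≤ μ₁·d_Ω(z) for all z ∈ β. Then with λ = (11/9)·e²·μ₁·(⌊Q^{log₂(4e²μ₁(1+μ₁))}⌋ + 1), one has ℓ(β) ≤ λ·d_Ω(x₀) and k_Ω(x,y) ≤ λ·log(3·d_Ω(x₀)/d_Ω(x)). -/
open Metric Set Real MeasureTheory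

noncomputable section

variable {X : Type*} [MetricSpace X]

lemma distCompl_pos {Ω : Set X} (hΩo : IsOpen Ω) (hΩne : Ω ≠ Set.univ) {z : X}
    (hz : z ∈ Ω) : 0 < distCompl Ω z := by
  have hne : Ωᶜ.Nonempty := by
    rcases Set.nonempty_compl.2 hΩne with ⟨w, hw⟩; exact ⟨w, hw⟩
  exact (hΩo.isClosed_compl.notMem_iff_infDist_pos hne).1 (fun h => h hz)

lemma distCompl_le_add (Ω : Set X) (z w : X) :
    distCompl Ω z ≤ distCompl Ω w + dist z w := Metric.infDist_le_infDist_add_dist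

lemma mem_of_dist_lt_distCompl {Ω : Set X} {z w : X} (h : dist z w < distCompl Ω z) :
    w ∈ Ω := by
  by_contra hw
  exact absurd (Metric.infDist_le_dist_of_mem (show w ∈ Ωᶜ from hw)) (not_le.2 h)

lemma unitSpeed_dist_le {γ : ℝ → X} {L : ℝ}
    (h : ∀ s ∈ Set.Icc (0:ℝ) L, ∀ t ∈ Set.Icc (0:ℝ) L, s ≤ t →
      eVariationOn γ (Set.Icc s t) = ENNReal.ofReal (t - s))
    {s t : ℝ} (hs : s ∈ Set.Icc (0:ℝ) L) (ht : t ∈ Set.Icc (0:ℝ) L) (hst : s ≤ t) :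
    dist (γ s) (γ t) ≤ t - s := by
  have := eVariationOn.edist_le γ (show s ∈ Set.Icc s t from ⟨le_refl s, hst⟩)
    (show t ∈ Set.Icc s t from ⟨hst, le_refl t⟩)
  rw [h s hs t ht hst] at this
  exact (edist_le_ofReal (by linarith [hst])).1 this

lemma distCompl_abs_sub (Ω : Set X) (z w : X) :
    |distCompl Ω z - distCompl Ω w| ≤ dist z w := by
  rw [abs_sub_le_iff]
  constructor
  · have := distCompl_le_add Ω z w; linarith
  · have := distCompl_le_add Ω w z; rw [dist_comm]; linarith

variable {Ω : Set X}

lemma curve_cont (hΩo : IsOpen Ω) (hΩne : Ω ≠ Set.univ) {γ : ℝ → X} {M : ℝ}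
    (hγ : IsUnitSpeedIn Ω γ M) :
    ContinuousOn (fun u => 1 / distCompl Ω (γ u)) (Set.Icc 0 M) := by
  have hLip : LipschitzOnWith 1 (fun u => distCompl Ω (γ u)) (Set.Icc 0 M) := by
    apply LipschitzOnWith.of_dist_le_mul
    intro s hs t ht
    rw [NNReal.coe_one, one_mul, Real.dist_eq, Real.dist_eq]
    rcases le_total s t with h | h
    · calc |distCompl Ω (γ s) - distCompl Ω (γ t)| ≤ dist (γ s) (γ t) :=
        distCompl_abs_sub ..
      _ ≤ t - s := unitSpeed_dist_le hγ.unitSpeed hs ht h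
      _ ≤ |s - t| := by rw [abs_sub_comm]; exact le_abs_self _
    · calc |distCompl Ω (γ s) - distCompl Ω (γ t)| = |distCompl Ω (γ t) - distCompl Ω (γ s)| := abs_sub_comm ..
      _ ≤ dist (γ t) (γ s) := distCompl_abs_sub ..
      _ ≤ s - t := unitSpeed_dist_le hγ.unitSpeed ht hs h
      _ ≤ |s - t| := le_abs_self _
  exact continuousOn_const.div hLip.continuousOn
    (fun u hu => ne_of_gt (distCompl_pos hΩo hΩne (hγ.mem u hu)))

lemma curve_intInt (hΩo : IsOpen Ω) (hΩne : Ω ≠ Set.univ) {γ : ℝ → X} {M : ℝ}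
    (hγ : IsUnitSpeedIn Ω γ M) {a b : ℝ} (ha : a ∈ Set.Icc (0:ℝ) M)
    (hb : b ∈ Set.Icc (0:ℝ) M) :
    IntervalIntegrable (fun u => 1 / distCompl Ω (γ u)) MeasureTheory.volume a b :=
  ((curve_cont hΩo hΩne hγ).mono (Set.uIcc_subset_Icc ha hb)).intervalIntegrable

lemma curve_dc_le_left {γ : ℝ → X} {M : ℝ} (hγ : IsUnitSpeedIn Ω γ M) {a u : ℝ}
    (ha : a ∈ Set.Icc (0:ℝ) M) (hu : u ∈ Set.Icc (0:ℝ) M) (hau : a ≤ u) :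
    distCompl Ω (γ u) ≤ distCompl Ω (γ a) + (u - a) := by
  have h1 := distCompl_le_add Ω (γ u) (γ a)
  have h2 : dist (γ u) (γ a) ≤ u - a := by
    rw [dist_comm]; exact unitSpeed_dist_le hγ.unitSpeed ha hu hau
  linarith

lemma curve_dc_le_right {γ : ℝ → X} {M : ℝ} (hγ : IsUnitSpeedIn Ω γ M) {u b : ℝ}
    (hu : u ∈ Set.Icc (0:ℝ) M) (hb : b ∈ Set.Icc (0:ℝ) M) (hub : u ≤ b) :
    distCompl Ω (γ u) ≤ distCompl Ω (γ b) + (b - u) := by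
  have h1 := distCompl_le_add Ω (γ u) (γ b)
  have h2 : dist (γ u) (γ b) ≤ b - u := unitSpeed_dist_le hγ.unitSpeed hu hb hub
  linarith

lemma integral_inv_ge_left (hΩo : IsOpen Ω) (hΩne : Ω ≠ Set.univ) {γ : ℝ → X} {M : ℝ}
    (hγ : IsUnitSpeedIn Ω γ M) {a b : ℝ} (ha : a ∈ Set.Icc (0:ℝ) M)
    (hb : b ∈ Set.Icc (0:ℝ) M) (hab : a ≤ b) :
    Real.log ((distCompl Ω (γ a) + (b - a)) / distCompl Ω (γ a)) ≤
      ∫ u in a..b, 1 / distCompl Ω (γ u) := by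
  set da := distCompl Ω (γ a) with hda_def
  have hda : 0 < da := distCompl_pos hΩo hΩne (hγ.mem a ha)
  have hsub : ∀ u ∈ Set.Icc a b, u ∈ Set.Icc (0:ℝ) M := fun u hu =>
    ⟨le_trans ha.1 hu.1, le_trans hu.2 hb.2⟩
  have hg : IntervalIntegrable (fun u => (u + (da - a))⁻¹) MeasureTheory.volume a b := by
    apply ContinuousOn.intervalIntegrable
    apply ContinuousOn.inv₀ (by fun_prop)
    intro u hu
    rw [Set.uIcc_of_le hab] at hu
    nlinarith [hu.1]
  have key : ∫ u in a..b, (u + (da - a))⁻¹ ≤ ∫ u in a..b, 1 / distCompl Ω (γ u) := by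
    apply intervalIntegral.integral_mono_on hab hg (curve_intInt hΩo hΩne hγ ha hb)
    intro u hu
    rw [one_div]
    apply inv_anti₀ (distCompl_pos hΩo hΩne (hγ.mem u (hsub u hu)))
    have := curve_dc_le_left hγ ha (hsub u hu) hu.1
    linarith
  refine le_trans (le_of_eq ?_) key
  rw [intervalIntegral.integral_comp_add_right (fun x => x⁻¹) (da - a),
    _root_.integral_inv]
  · congr 1; ring
  · intro h
    rw [Set.uIcc_of_le (by linarith)] at h
    nlinarith [h.1]

lemma integral_inv_ge_right (hΩo : IsOpen Ω) (hΩne : Ω ≠ Set.univ) {γ : ℝ → X} {M : ℝ}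
    (hγ : IsUnitSpeedIn Ω γ M) {a b : ℝ} (ha : a ∈ Set.Icc (0:ℝ) M)
    (hb : b ∈ Set.Icc (0:ℝ) M) (hab : a ≤ b) :
    Real.log ((distCompl Ω (γ b) + (b - a)) / distCompl Ω (γ b)) ≤
      ∫ u in a..b, 1 / distCompl Ω (γ u) := by
  set db := distCompl Ω (γ b) with hdb_def
  have hdb : 0 < db := distCompl_pos hΩo hΩne (hγ.mem b hb)
  have hsub : ∀ u ∈ Set.Icc a b, u ∈ Set.Icc (0:ℝ) M := fun u hu =>
    ⟨le_trans ha.1 hu.1, le_trans hu.2 hb.2⟩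
  have hg : IntervalIntegrable (fun u => (db + b - u)⁻¹) MeasureTheory.volume a b := by
    apply ContinuousOn.intervalIntegrable
    apply ContinuousOn.inv₀ (by fun_prop)
    intro u hu
    rw [Set.uIcc_of_le hab] at hu
    nlinarith [hu.2]
  have key : ∫ u in a..b, (db + b - u)⁻¹ ≤ ∫ u in a..b, 1 / distCompl Ω (γ u) := by
    apply intervalIntegral.integral_mono_on hab hg (curve_intInt hΩo hΩne hγ ha hb)
    intro u hu
    rw [one_div]
    apply inv_anti₀ (distCompl_pos hΩo hΩne (hγ.mem u (hsub u hu)))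
    have := curve_dc_le_right hγ (hsub u hu) hb hu.2
    linarith
  refine le_trans (le_of_eq ?_) key
  rw [show (fun u => (db + b - u)⁻¹) = (fun u => (fun x => x⁻¹) (db + b - u)) from rfl,
    intervalIntegral.integral_comp_sub_left (fun x => x⁻¹) (db + b),
    _root_.integral_inv]
  · congr 1; ring
  · intro h
    rw [Set.uIcc_of_le (by linarith)] at h
    nlinarith [h.1]

lemma log_ratio_le_integral (hΩo : IsOpen Ω) (hΩne : Ω ≠ Set.univ) {γ : ℝ → X} {M : ℝ}
    (hγ : IsUnitSpeedIn Ω γ M) {a b : ℝ} (ha : a ∈ Set.Icc (0:ℝ) M)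
    (hb : b ∈ Set.Icc (0:ℝ) M) (hab : a ≤ b) :
    Real.log (distCompl Ω (γ b) / distCompl Ω (γ a)) ≤
      ∫ u in a..b, 1 / distCompl Ω (γ u) := by
  refine le_trans ?_ (integral_inv_ge_left hΩo hΩne hγ ha hb hab)
  have hda : 0 < distCompl Ω (γ a) := distCompl_pos hΩo hΩne (hγ.mem a ha)
  have hdb : 0 < distCompl Ω (γ b) := distCompl_pos hΩo hΩne (hγ.mem b hb)
  apply Real.log_le_log (by positivity)
  have := curve_dc_le_left hγ ha hb hab
  gcongr

lemma log_ratio_le_integral' (hΩo : IsOpen Ω) (hΩne : Ω ≠ Set.univ) {γ : ℝ → X} {M : ℝ}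
    (hγ : IsUnitSpeedIn Ω γ M) {a b : ℝ} (ha : a ∈ Set.Icc (0:ℝ) M)
    (hb : b ∈ Set.Icc (0:ℝ) M) (hab : a ≤ b) :
    Real.log (distCompl Ω (γ a) / distCompl Ω (γ b)) ≤
      ∫ u in a..b, 1 / distCompl Ω (γ u) := by
  refine le_trans ?_ (integral_inv_ge_right hΩo hΩne hγ ha hb hab)
  have hda : 0 < distCompl Ω (γ a) := distCompl_pos hΩo hΩne (hγ.mem a ha)
  have hdb : 0 < distCompl Ω (γ b) := distCompl_pos hΩo hΩne (hγ.mem b hb)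
  have := curve_dc_le_right hγ ha hb hab
  gcongr

lemma qhLength_nonneg_s14 (Ω : Set X) {γ : ℝ → X} {M : ℝ} (hγ : IsUnitSpeedIn Ω γ M) :
    0 ≤ qhLength Ω γ M := by
  apply intervalIntegral.integral_nonneg hγ.nonneg
  intro u _
  exact div_nonneg zero_le_one Metric.infDist_nonneg

lemma qhDist_le (Ω : Set X) {γ : ℝ → X} {M : ℝ} (hγ : IsUnitSpeedIn Ω γ M)
    {x y : X} (h0 : γ 0 = x) (hM : γ M = y) :
    qhDist Ω x y ≤ qhLength Ω γ M := by
  apply ciInf_le ⟨0, ?_⟩ (⟨(γ, M), hγ, h0, hM⟩ :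
    {p : (ℝ → X) × ℝ // IsUnitSpeedIn Ω p.1 p.2 ∧ p.1 0 = x ∧ p.1 p.2 = y})
  rintro r ⟨p, rfl⟩
  exact qhLength_nonneg_s14 Ω p.2.1

lemma piece_len (hΩo : IsOpen Ω) (hΩne : Ω ≠ Set.univ) {γ : ℝ → X} {M : ℝ}
    (hγ : IsUnitSpeedIn Ω γ M) {a b : ℝ} (ha : a ∈ Set.Icc (0:ℝ) M)
    (hb : b ∈ Set.Icc (0:ℝ) M) (hab : a ≤ b)
    (h1 : (∫ u in a..b, 1 / distCompl Ω (γ u)) ≤ 1) :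
    b - a ≤ Real.exp 1 * distCompl Ω (γ a) := by
  have hda : 0 < distCompl Ω (γ a) := distCompl_pos hΩo hΩne (hγ.mem a ha)
  have hsub : ∀ u ∈ Set.Icc a b, u ∈ Set.Icc (0:ℝ) M := fun u hu =>
    ⟨le_trans ha.1 hu.1, le_trans hu.2 hb.2⟩
  -- pointwise bound : distCompl (γ t) ≤ exp 1 * distCompl (γ a) on [a, b]
  have hpt : ∀ t ∈ Set.Icc a b, distCompl Ω (γ t) ≤ Real.exp 1 * distCompl Ω (γ a) := by
    intro t ht
    have hdt : 0 < distCompl Ω (γ t) := distCompl_pos hΩo hΩne (hγ.mem t (hsub t ht))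
    have hlog : Real.log (distCompl Ω (γ t) / distCompl Ω (γ a)) ≤ 1 := by
      have h2 : (∫ u in a..t, 1 / distCompl Ω (γ u)) ≤ ∫ u in a..b, 1 / distCompl Ω (γ u) := by
        have hsplit : (∫ u in a..b, 1 / distCompl Ω (γ u)) =
            (∫ u in a..t, 1 / distCompl Ω (γ u)) + ∫ u in t..b, 1 / distCompl Ω (γ u) :=
          (intervalIntegral.integral_add_adjacent_intervals
            (curve_intInt hΩo hΩne hγ ha (hsub t ht))
            (curve_intInt hΩo hΩne hγ (hsub t ht) hb)).symm
        have hnn : 0 ≤ ∫ u in t..b, 1 / distCompl Ω (γ u) :=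
          intervalIntegral.integral_nonneg ht.2
            (fun u _ => div_nonneg zero_le_one Metric.infDist_nonneg)
        linarith
      exact le_trans (log_ratio_le_integral hΩo hΩne hγ ha (hsub t ht) ht.1) (by linarith)
    have := (Real.log_le_iff_le_exp (by positivity)).1 hlog
    calc distCompl Ω (γ t) = distCompl Ω (γ t) / distCompl Ω (γ a) * distCompl Ω (γ a) := by
          field_simp
      _ ≤ Real.exp 1 * distCompl Ω (γ a) := by gcongr
  have hmono : b - a ≤ (Real.exp 1 * distCompl Ω (γ a)) * ∫ u in a..b, 1 / distCompl Ω (γ u) := by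
    have : (∫ u in a..b, (1:ℝ)) ≤ ∫ u in a..b,
        (Real.exp 1 * distCompl Ω (γ a)) * (1 / distCompl Ω (γ u)) := by
      apply intervalIntegral.integral_mono_on hab intervalIntegrable_const
        ((curve_intInt hΩo hΩne hγ ha hb).const_mul _)
      intro u hu
      have hdu : 0 < distCompl Ω (γ u) := distCompl_pos hΩo hΩne (hγ.mem u (hsub u hu))
      have h := hpt u hu
      rw [mul_one_div, le_div_iff₀ hdu, one_mul]
      exact h
    rw [intervalIntegral.integral_const, smul_eq_mul, mul_one] at this
    rwa [intervalIntegral.integral_const_mul] at this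
  calc b - a ≤ (Real.exp 1 * distCompl Ω (γ a)) * ∫ u in a..b, 1 / distCompl Ω (γ u) := hmono
    _ ≤ (Real.exp 1 * distCompl Ω (γ a)) * 1 := by
        apply mul_le_mul_of_nonneg_left h1 (by positivity)
    _ = Real.exp 1 * distCompl Ω (γ a) := mul_one _

lemma qhDist_le_log_left (hX : IsLengthSpace X) (hΩo : IsOpen Ω) (hΩne : Ω ≠ Set.univ)
    {z w : X} (hz : z ∈ Ω) {M : ℝ} (hM1 : dist z w < M) (hM2 : M < distCompl Ω z) :
    qhDist Ω z w ≤ Real.log (distCompl Ω z / (distCompl Ω z - M)) := by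
  set d := distCompl Ω z with hd_def
  have hd : 0 < d := distCompl_pos hΩo hΩne hz
  obtain ⟨σ, Lσ, hσ, h0, hL, hlen⟩ := hX z w (M - dist z w) (by linarith)
  have hLσ : 0 ≤ Lσ := hσ.nonneg
  have hLσM : Lσ ≤ M := by linarith
  have hdistz : ∀ u ∈ Set.Icc (0:ℝ) Lσ, dist z (σ u) ≤ u := by
    intro u hu
    have := unitSpeed_dist_le hσ.unitSpeed (Set.left_mem_Icc.2 hLσ) hu hu.1
    rw [h0] at this; simpa using this
  have hmem : ∀ u ∈ Set.Icc (0:ℝ) Lσ, σ u ∈ Ω := by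
    intro u hu
    exact mem_of_dist_lt_distCompl (lt_of_le_of_lt (hdistz u hu) (by linarith [hu.2]))
  have hσΩ : IsUnitSpeedIn Ω σ Lσ := ⟨hσ.nonneg, hmem, hσ.unitSpeed⟩
  have hdlow : ∀ u ∈ Set.Icc (0:ℝ) Lσ, d - u ≤ distCompl Ω (σ u) := by
    intro u hu
    have := distCompl_le_add Ω z (σ u)
    have := hdistz u hu
    linarith
  have hcomp : qhLength Ω σ Lσ ≤ ∫ u in (0:ℝ)..Lσ, (d - u)⁻¹ := by
    apply intervalIntegral.integral_mono_on hLσ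
      (curve_intInt hΩo hΩne hσΩ (Set.left_mem_Icc.2 hLσ) (Set.right_mem_Icc.2 hLσ))
    · apply ContinuousOn.intervalIntegrable
      apply ContinuousOn.inv₀ (by fun_prop)
      intro u hu
      rw [Set.uIcc_of_le hLσ] at hu
      have := hu.2; intro h; nlinarith
    · intro u hu
      rw [one_div]
      exact inv_anti₀ (by linarith [hu.2]) (hdlow u hu)
  have hval : (∫ u in (0:ℝ)..Lσ, (d - u)⁻¹) = Real.log (d / (d - Lσ)) := by
    rw [show (fun u => (d - u)⁻¹) = (fun u => (fun x => x⁻¹) (d - u)) from rfl,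
      intervalIntegral.integral_comp_sub_left (fun x => x⁻¹) d, _root_.integral_inv]
    · congr 1; ring_nf
    · intro h
      rw [Set.uIcc_of_le (by linarith)] at h
      nlinarith [h.1]
  calc qhDist Ω z w ≤ qhLength Ω σ Lσ := qhDist_le Ω hσΩ h0 hL
    _ ≤ Real.log (d / (d - Lσ)) := by rw [← hval]; exact hcomp
    _ ≤ Real.log (d / (d - M)) := by
        apply Real.log_le_log (div_pos hd (by linarith))
        apply div_le_div_of_nonneg_left (le_of_lt hd) (by linarith) (by linarith)

lemma qhDist_le_log_right (hX : IsLengthSpace X) (hΩo : IsOpen Ω) (hΩne : Ω ≠ Set.univ)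
    {z w : X} (hw : w ∈ Ω) {M : ℝ} (hM1 : dist z w < M) (hM2 : M < distCompl Ω w) :
    qhDist Ω z w ≤ Real.log (distCompl Ω w / (distCompl Ω w - M)) := by
  set d := distCompl Ω w with hd_def
  have hd : 0 < d := distCompl_pos hΩo hΩne hw
  obtain ⟨σ, Lσ, hσ, h0, hL, hlen⟩ := hX z w (M - dist z w) (by linarith)
  have hLσ : 0 ≤ Lσ := hσ.nonneg
  have hLσM : Lσ ≤ M := by linarith
  have hdistw : ∀ u ∈ Set.Icc (0:ℝ) Lσ, dist (σ u) w ≤ Lσ - u := by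
    intro u hu
    have := unitSpeed_dist_le hσ.unitSpeed hu (Set.right_mem_Icc.2 hLσ) hu.2
    rw [hL] at this; exact this
  have hmem : ∀ u ∈ Set.Icc (0:ℝ) Lσ, σ u ∈ Ω := by
    intro u hu
    apply mem_of_dist_lt_distCompl (z := w)
    rw [dist_comm]
    exact lt_of_le_of_lt (hdistw u hu) (by linarith [hu.1])
  have hσΩ : IsUnitSpeedIn Ω σ Lσ := ⟨hσ.nonneg, hmem, hσ.unitSpeed⟩
  have hdlow : ∀ u ∈ Set.Icc (0:ℝ) Lσ, d - (Lσ - u) ≤ distCompl Ω (σ u) := by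
    intro u hu
    have := distCompl_le_add Ω w (σ u)
    have h2 := hdistw u hu
    rw [dist_comm] at this
    linarith
  have hcomp : qhLength Ω σ Lσ ≤ ∫ u in (0:ℝ)..Lσ, (u + (d - Lσ))⁻¹ := by
    apply intervalIntegral.integral_mono_on hLσ
      (curve_intInt hΩo hΩne hσΩ (Set.left_mem_Icc.2 hLσ) (Set.right_mem_Icc.2 hLσ))
    · apply ContinuousOn.intervalIntegrable
      apply ContinuousOn.inv₀ (by fun_prop)
      intro u hu
      rw [Set.uIcc_of_le hLσ] at hu
      have := hu.1; intro h; nlinarith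
    · intro u hu
      rw [one_div]
      refine inv_anti₀ (by linarith [hu.1]) ?_
      have := hdlow u hu; linarith
  have hval : (∫ u in (0:ℝ)..Lσ, (u + (d - Lσ))⁻¹) = Real.log (d / (d - Lσ)) := by
    rw [intervalIntegral.integral_comp_add_right (fun x => x⁻¹) (d - Lσ), _root_.integral_inv]
    · congr 1; ring_nf
    · intro h
      rw [Set.uIcc_of_le (by linarith)] at h
      nlinarith [h.1]
  calc qhDist Ω z w ≤ qhLength Ω σ Lσ := qhDist_le Ω hσΩ h0 hL
    _ ≤ Real.log (d / (d - Lσ)) := by rw [← hval]; exact hcomp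
    _ ≤ Real.log (d / (d - M)) := by
        apply Real.log_le_log (div_pos hd (by linarith))
        apply div_le_div_of_nonneg_left (le_of_lt hd) (by linarith) (by linarith)

lemma sep_left (hX : IsLengthSpace X) (hΩo : IsOpen Ω) (hΩne : Ω ≠ Set.univ)
    {z w : X} (hz : z ∈ Ω) (h1 : 1 ≤ qhDist Ω z w) :
    (1 - Real.exp (-1)) * distCompl Ω z ≤ dist z w := by
  by_contra hcon
  push_neg at hcon
  set d := distCompl Ω z with hd_def
  have hd : 0 < d := distCompl_pos hΩo hΩne hz
  have he : Real.exp (-1) < 1 := Real.exp_lt_one_iff.2 (by norm_num)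
  have hepos : 0 < Real.exp (-1) := Real.exp_pos _
  set M := (dist z w + (1 - Real.exp (-1)) * d) / 2 with hM_def
  have hM1 : dist z w < M := by rw [hM_def]; linarith
  have hMlt : M < (1 - Real.exp (-1)) * d := by rw [hM_def]; linarith
  have hM2 : M < d := by nlinarith
  have hkey := qhDist_le_log_left hX hΩo hΩne hz hM1 hM2
  have hlt : Real.log (d / (d - M)) < 1 := by
    rw [Real.log_lt_iff_lt_exp (div_pos hd (by linarith))]
    rw [div_lt_iff₀ (by linarith)]
    have hexp : Real.exp 1 * Real.exp (-1) = 1 := by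
      rw [← Real.exp_add]; norm_num
    nlinarith
  linarith

lemma sep_right (hX : IsLengthSpace X) (hΩo : IsOpen Ω) (hΩne : Ω ≠ Set.univ)
    {z w : X} (hw : w ∈ Ω) (h1 : 1 ≤ qhDist Ω z w) :
    (1 - Real.exp (-1)) * distCompl Ω w ≤ dist z w := by
  by_contra hcon
  push_neg at hcon
  set d := distCompl Ω w with hd_def
  have hd : 0 < d := distCompl_pos hΩo hΩne hw
  have he : Real.exp (-1) < 1 := Real.exp_lt_one_iff.2 (by norm_num)
  have hepos : 0 < Real.exp (-1) := Real.exp_pos _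
  set M := (dist z w + (1 - Real.exp (-1)) * d) / 2 with hM_def
  have hM1 : dist z w < M := by rw [hM_def]; linarith
  have hMlt : M < (1 - Real.exp (-1)) * d := by rw [hM_def]; linarith
  have hM2 : M < d := by nlinarith
  have hkey := qhDist_le_log_right hX hΩo hΩne hw hM1 hM2
  have hlt : Real.log (d / (d - M)) < 1 := by
    rw [Real.log_lt_iff_lt_exp (div_pos hd (by linarith))]
    rw [div_lt_iff₀ (by linarith)]
    have hexp : Real.exp 1 * Real.exp (-1) = 1 := by
      rw [← Real.exp_add]; norm_num
    nlinarith
  linarith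

lemma doubling_iter {Q : ℝ} (hQ : 1 < Q) (hQD : QDoubling X Q) :
    ∀ (k : ℕ) (x : X) (r : ℝ) (S : Finset X), (↑S : Set X) ⊆ Metric.ball x r →
    (∀ a ∈ S, ∀ b ∈ S, a ≠ b → r / 2 ^ (k + 1) ≤ dist a b) → (S.card : ℝ) ≤ Q ^ (k + 1) := by
  intro k
  induction k with
  | zero =>
    intro x r S hball hsep
    simpa using hQD x r S hball (by simpa using hsep)
  | succ k ih =>
    intro x r S hball hsep
    classical
    rcases S.eq_empty_or_nonempty with rfl | hSne
    · simp; positivity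
    have hr : 0 < r := by
      obtain ⟨s, hs⟩ := hSne
      have := hball hs
      rw [Metric.mem_ball] at this
      linarith [dist_nonneg (x := s) (y := x)]
    -- maximal (r/2)-separated subset of S (max cardinality)
    set 𝒮 : Finset (Finset X) :=
      S.powerset.filter (fun T => ∀ a ∈ T, ∀ b ∈ T, a ≠ b → r / 2 ≤ dist a b) with h𝒮
    have h𝒮ne : 𝒮.Nonempty := ⟨∅, by simp [h𝒮]⟩
    obtain ⟨T, hT𝒮, hTmax⟩ := 𝒮.exists_max_image Finset.card h𝒮ne
    rw [h𝒮, Finset.mem_filter, Finset.mem_powerset] at hT𝒮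
    obtain ⟨hTS, hTsep⟩ := hT𝒮
    have hTcard : (T.card : ℝ) ≤ Q := hQD x r T (fun t ht => hball (hTS ht)) hTsep
    -- every point of S is within r/2 of some point of T
    have hcover : ∀ s ∈ S, ∃ t ∈ T, dist s t < r / 2 := by
      intro s hs
      by_cases hsT : s ∈ T
      · exact ⟨s, hsT, by simpa using (by positivity : (0:ℝ) < r / 2)⟩
      by_contra hno
      push_neg at hno
      have hins : insert s T ∈ 𝒮 := by
        rw [h𝒮, Finset.mem_filter, Finset.mem_powerset]
        refine ⟨Finset.insert_subset hs hTS, ?_⟩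
        intro a ha b hb hab
        rw [Finset.mem_insert] at ha hb
        rcases ha with rfl | ha
        · rcases hb with rfl | hb
          · exact absurd rfl hab
          · exact hno b hb
        · rcases hb with rfl | hb
          · rw [dist_comm]; exact hno a ha
          · exact hTsep a ha b hb hab
      have := hTmax _ hins
      rw [Finset.card_insert_of_notMem hsT] at this
      omega
    -- cover S by balls of radius r/2 around T
    have hsub : S ⊆ T.biUnion (fun t => S.filter (fun s => dist s t < r / 2)) := by
      intro s hs
      rw [Finset.mem_biUnion]
      obtain ⟨t, ht, hd⟩ := hcover s hs
      exact ⟨t, ht, Finset.mem_filter.2 ⟨hs, hd⟩⟩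
    have hScard : S.card ≤ ∑ t ∈ T, (S.filter (fun s => dist s t < r / 2)).card :=
      le_trans (Finset.card_le_card hsub) (Finset.card_biUnion_le)
    have hpiece : ∀ t ∈ T, ((S.filter (fun s => dist s t < r / 2)).card : ℝ) ≤ Q ^ (k + 1) := by
      intro t _
      apply ih t (r / 2)
      · intro s hss
        rw [Finset.coe_filter] at hss
        exact Metric.mem_ball.2 hss.2
      · intro a ha b hb hab
        rw [Finset.mem_filter] at ha hb
        have := hsep a ha.1 b hb.1 hab
        calc r / 2 / 2 ^ (k + 1) = r / 2 ^ (k + 1 + 1) := by ring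
          _ ≤ dist a b := this
    calc (S.card : ℝ) ≤ ∑ t ∈ T, ((S.filter (fun s => dist s t < r / 2)).card : ℝ) := by
          exact_mod_cast hScard
      _ ≤ ∑ _t ∈ T, (Q : ℝ) ^ (k + 1) := Finset.sum_le_sum hpiece
      _ = (T.card : ℝ) * Q ^ (k + 1) := by rw [Finset.sum_const]; ring
      _ ≤ Q * Q ^ (k + 1) := by
          apply mul_le_mul_of_nonneg_right hTcard (by positivity)
      _ = Q ^ (k + 1 + 1) := by ring

lemma exp_two_ge : (7.38:ℝ) ≤ Real.exp 2 := by
  have he2 : Real.exp 2 = Real.exp 1 * Real.exp 1 := by rw [← Real.exp_add]; norm_num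
  rw [he2]; nlinarith [Real.exp_one_gt_d9]

lemma final1_aux (μ₁ Nv Dv : ℝ) (hμ : 1 ≤ μ₁) (hN0 : 0 ≤ Nv) (hD : 0 < Dv) :
    Real.exp 1 * (2*Nv*Dv) ≤ (11 / 9 * Real.exp 2 * μ₁ * (Nv + 1)) * Dv := by
  have he2 : Real.exp 2 = Real.exp 1 * Real.exp 1 := by rw [← Real.exp_add]; norm_num
  have h2e : 2 * Real.exp 1 ≤ 11/9 * Real.exp 2 := by
    rw [he2]; nlinarith [Real.exp_one_gt_d9, Real.exp_pos 1]
  calc Real.exp 1 * (2*Nv*Dv) = (2*Real.exp 1) * (Nv*Dv) := by ring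
    _ ≤ (11/9*Real.exp 2) * (Nv*Dv) := by
        apply mul_le_mul_of_nonneg_right h2e (mul_nonneg hN0 hD.le)
    _ ≤ (11/9*Real.exp 2) * (μ₁*((Nv+1)*Dv)) := by
        apply mul_le_mul_of_nonneg_left _ (by positivity)
        nlinarith [mul_nonneg hN0 hD.le]
    _ = (11 / 9 * Real.exp 2 * μ₁ * (Nv + 1)) * Dv := by ring

lemma final2_aux (μ₁ T Nv lμ : ℝ) (hμ : 1 ≤ μ₁) (hT0 : 0 ≤ T) (hN0 : 0 ≤ Nv)
    (hlμ0 : 0 ≤ lμ) (hlμ : lμ ≤ μ₁) :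
    ((lμ + T)/Real.log 2 + 1) * Nv ≤
      (11 / 9 * Real.exp 2 * μ₁ * (Nv + 1)) * (Real.log 3 + T) := by
  have hl2 : (0.6931:ℝ) < Real.log 2 := by have := Real.log_two_gt_d9; linarith
  have hl3 : 1 ≤ Real.log 3 := by
    rw [show (1:ℝ) = Real.log (Real.exp 1) from (Real.log_exp 1).symm]
    apply Real.log_le_log (Real.exp_pos 1)
    nlinarith [Real.exp_one_lt_d9]
  have he72 := exp_two_ge
  have hl2' : Real.log 2 ≠ 0 := by linarith
  rw [div_add' _ _ _ hl2', div_mul_eq_mul_div, div_le_iff₀ (by linarith : (0:ℝ) < Real.log 2),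
    one_mul]
  have hl2u : Real.log 2 < 0.6932 := by have := Real.log_two_lt_d9; linarith
  have hstepA : lμ + T + Real.log 2 ≤ 2*μ₁*(1+T) := by
    nlinarith [mul_nonneg (by linarith : (0:ℝ) ≤ 2*μ₁ - 1) hT0]
  calc (lμ + T + Real.log 2) * Nv ≤ (2*μ₁*(1+T)) * Nv :=
        mul_le_mul_of_nonneg_right hstepA hN0
    _ = 2 * (μ₁*(Nv*(1+T))) := by ring
    _ ≤ (11/9*Real.exp 2*Real.log 2) * (μ₁*((Nv+1)*(Real.log 3+T))) := by
        apply mul_le_mul (by nlinarith) _ _ (by nlinarith)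
        · apply mul_le_mul_of_nonneg_left _ (by linarith : (0:ℝ) ≤ μ₁)
          apply mul_le_mul (by linarith) (by linarith) (by linarith) (by linarith)
        · apply mul_nonneg (by linarith)
          apply mul_nonneg hN0 (by linarith)
    _ = (11 / 9 * Real.exp 2 * μ₁ * (Nv + 1)) * (Real.log 3 + T) * Real.log 2 := by ring


set_option maxHeartbeats 2000000 in
/-- Lemma 5.5: length and quasihyperbolic-distance bounds for a
quasihyperbolic geodesic satisfying a cone condition, in a `Q`-doubling length
space. -/
theorem cone_geodesic_length_bound (Q : ℝ) (hQ : 1 < Q) (hQD : QDoubling X Q)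
    (hX : IsLengthSpace X) (Ω : Set X) (hΩ : IsProperSubdomain Ω)
    (β : ℝ → X) (L : ℝ) (hβ : IsQHGeodesic Ω β L)
    (s₀ : ℝ) (hs₀ : s₀ ∈ Set.Icc (0:ℝ) L)
    (hmax : ∀ t ∈ Set.Icc (0:ℝ) L, distCompl Ω (β t) ≤ distCompl Ω (β s₀))
    (μ₁ : ℝ) (hμ : 1 ≤ μ₁)
    (hcone : ∀ t ∈ Set.Icc (0:ℝ) L, dist (β 0) (β t) ≤ μ₁ * distCompl Ω (β t)) :
    L ≤ ((11 / 9) * Real.exp 2 * μ₁ *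
        ((⌊Q ^ (Real.logb 2 (4 * Real.exp 2 * μ₁ * (1 + μ₁)))⌋₊ : ℝ) + 1)) *
      distCompl Ω (β s₀) ∧
    qhDist Ω (β 0) (β L) ≤ ((11 / 9) * Real.exp 2 * μ₁ *
        ((⌊Q ^ (Real.logb 2 (4 * Real.exp 2 * μ₁ * (1 + μ₁)))⌋₊ : ℝ) + 1)) *
      Real.log (3 * distCompl Ω (β s₀) / distCompl Ω (β 0)) := by
  classical
  obtain ⟨hΩo, hΩconn, hΩne⟩ := hΩ
  obtain ⟨hUS, hgeo⟩ := hβ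
  classical
  have hL0 : 0 ≤ L := hUS.nonneg
  have h0mem : (0:ℝ) ∈ Set.Icc (0:ℝ) L := ⟨le_refl 0, hL0⟩
  have hLmem : L ∈ Set.Icc (0:ℝ) L := ⟨hL0, le_refl L⟩
  set D := distCompl Ω (β s₀) with hD_def
  set d₀ := distCompl Ω (β 0) with hd₀_def
  have hD : 0 < D := distCompl_pos hΩo hΩne (hUS.mem s₀ hs₀)
  have hd₀ : 0 < d₀ := distCompl_pos hΩo hΩne (hUS.mem 0 h0mem)
  have hd₀D : d₀ ≤ D := hmax 0 h0mem
  have hdpos : ∀ t ∈ Set.Icc (0:ℝ) L, 0 < distCompl Ω (β t) := fun t ht =>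
    distCompl_pos hΩo hΩne (hUS.mem t ht)
  have hlow : ∀ t ∈ Set.Icc (0:ℝ) L, d₀ ≤ (1 + μ₁) * distCompl Ω (β t) := by
    intro t ht
    have h1 := distCompl_le_add Ω (β 0) (β t)
    have h2 := hcone t ht
    linarith
  set F : ℝ → ℝ := fun t => ∫ u in (0:ℝ)..t, 1 / distCompl Ω (β u) with hF_def
  have hInt := fun {a b} ha hb => curve_intInt (a := a) (b := b) hΩo hΩne hUS ha hb
  have hFadd : ∀ a b, a ∈ Set.Icc (0:ℝ) L → b ∈ Set.Icc (0:ℝ) L → a ≤ b →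
      F b - F a = ∫ u in a..b, 1 / distCompl Ω (β u) := by
    intro a b ha hb _
    have := intervalIntegral.integral_add_adjacent_intervals
      (hInt h0mem ha) (hInt ha hb)
    rw [hF_def]
    dsimp only
    linarith
  have hFlb : ∀ a b, a ∈ Set.Icc (0:ℝ) L → b ∈ Set.Icc (0:ℝ) L → a ≤ b →
      (b - a) / D ≤ F b - F a := by
    intro a b ha hb hab
    rw [hFadd a b ha hb hab]
    have : (∫ _u in a..b, 1/D) ≤ ∫ u in a..b, 1 / distCompl Ω (β u) := by
      apply intervalIntegral.integral_mono_on hab intervalIntegrable_const (hInt ha hb)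
      intro u hu
      have hu' : u ∈ Set.Icc (0:ℝ) L := ⟨le_trans ha.1 hu.1, le_trans hu.2 hb.2⟩
      have h1 := hdpos u hu'
      have h2 := hmax u hu'
      rw [div_le_div_iff₀ hD h1]
      nlinarith
    rw [intervalIntegral.integral_const, smul_eq_mul] at this
    calc (b - a)/D = (b-a) * (1/D) := by ring
      _ ≤ _ := this
  have hFub : ∀ a b, a ∈ Set.Icc (0:ℝ) L → b ∈ Set.Icc (0:ℝ) L → a ≤ b →
      F b - F a ≤ (b - a) * ((1 + μ₁) / d₀) := by
    intro a b ha hb hab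
    rw [hFadd a b ha hb hab]
    have : (∫ u in a..b, 1 / distCompl Ω (β u)) ≤ ∫ _u in a..b, (1+μ₁)/d₀ := by
      apply intervalIntegral.integral_mono_on hab (hInt ha hb) intervalIntegrable_const
      intro u hu
      have hu' : u ∈ Set.Icc (0:ℝ) L := ⟨le_trans ha.1 hu.1, le_trans hu.2 hb.2⟩
      have h1 := hdpos u hu'
      have h2 := hlow u hu'
      rw [div_le_div_iff₀ h1 hd₀]
      nlinarith
    rw [intervalIntegral.integral_const, smul_eq_mul] at this
    linarith
  have hF0 : F 0 = 0 := by rw [hF_def]; simp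
  have hFcont : ContinuousOn F (Set.Icc 0 L) := by
    have : LipschitzOnWith ((1+μ₁)/d₀).toNNReal F (Set.Icc 0 L) := by
      apply LipschitzOnWith.of_dist_le_mul
      intro s hs t ht
      rw [Real.coe_toNNReal _ (by positivity), Real.dist_eq, Real.dist_eq]
      rcases le_total s t with h | h
      · have h1 := hFub s t hs ht h
        have h2 := hFlb s t hs ht h
        have h3 : (0:ℝ) ≤ (t - s)/D := div_nonneg (by linarith) hD.le
        rw [abs_sub_comm (F s) (F t), abs_of_nonneg (by linarith),
          abs_sub_comm s t, abs_of_nonneg (by linarith)]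
        nlinarith
      · have h1 := hFub t s ht hs h
        have h2 := hFlb t s ht hs h
        have h3 : (0:ℝ) ≤ (s - t)/D := div_nonneg (by linarith) hD.le
        rw [abs_of_nonneg (by linarith), abs_of_nonneg (by linarith)]
        nlinarith
    exact this.continuousOn
  set κ := F L with hκ_def
  have hκ0 : 0 ≤ κ := by have := hFlb 0 L h0mem hLmem hL0; rw [hF0] at this; 
                         have h2 := div_nonneg (by linarith : (0:ℝ) ≤ L - 0) hD.le; linarith
  set p := ⌊κ⌋₊ with hp_def
  have hjval : ∀ j : ℕ, j ≤ p → ∃ t, t ∈ Set.Icc 0 L ∧ F t = j := by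
    intro j hj
    have hmem : (j:ℝ) ∈ Set.Icc (F 0) (F L) := by
      constructor
      · rw [hF0]; positivity
      · calc (j:ℝ) ≤ p := by exact_mod_cast hj
          _ ≤ κ := Nat.floor_le hκ0
    have := intermediate_value_Icc hL0 hFcont hmem
    obtain ⟨t, ht, hFt⟩ := this
    exact ⟨t, ht, hFt⟩
  set u : ℕ → ℝ := fun j => if h : j ≤ p then (hjval j h).choose else L with hu_def
  have huIcc : ∀ j, j ≤ p → u j ∈ Set.Icc (0:ℝ) L := by
    intro j h
    rw [hu_def]; dsimp only; rw [dif_pos h]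
    exact (hjval j h).choose_spec.1
  have huF : ∀ j, j ≤ p → F (u j) = j := by
    intro j h
    rw [hu_def]; dsimp only; rw [dif_pos h]
    exact (hjval j h).choose_spec.2
  have humono : ∀ i j : ℕ, i ≤ j → j ≤ p → u i ≤ u j := by
    intro i j hij hj
    by_contra hcon
    push_neg at hcon
    have h1 := hFlb (u j) (u i) (huIcc j hj) (huIcc i (le_trans hij hj)) hcon.le
    rw [huF i (le_trans hij hj), huF j hj] at h1
    have h2 : (0:ℝ) < (u i - u j)/D := div_pos (by linarith) hD
    have : (i:ℝ) ≤ j := by exact_mod_cast hij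
    linarith
  have hu0 : u 0 = 0 := by
    have h2 := (huIcc 0 (Nat.zero_le p)).1
    rcases h2.lt_or_eq with hlt | heq
    · exfalso
      have h1 := hFlb 0 (u 0) h0mem (huIcc 0 (Nat.zero_le p)) h2
      rw [hF0, huF 0 (Nat.zero_le p)] at h1
      simp only [Nat.cast_zero] at h1
      have h3 : (0:ℝ) < (u 0 - 0)/D := div_pos (by linarith) hD
      linarith
    · exact heq.symm
  -- piece integral values
  have hpieceInt : ∀ j : ℕ, j < p → (∫ v in (u j)..(u (j+1)), 1 / distCompl Ω (β v)) = 1 := by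
    intro j hj
    have hj1 : j + 1 ≤ p := hj
    have h1 := hFadd (u j) (u (j+1)) (huIcc j hj.le) (huIcc (j+1) hj1)
      (humono j (j+1) (by omega) hj1)
    rw [huF j hj.le, huF (j+1) hj1] at h1
    push_cast at h1
    linarith
  have hplast : (∫ v in (u p)..L, 1 / distCompl Ω (β v)) ≤ 1 := by
    have h1 := hFadd (u p) L (huIcc p le_rfl) hLmem (huIcc p le_rfl).2
    rw [huF p le_rfl] at h1
    have h2 : κ < p + 1 := Nat.lt_floor_add_one κ
    rw [hκ_def] at h2
    push_cast at h1 h2 ⊢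
    linarith
  have hlen : L ≤ Real.exp 1 * ∑ j ∈ Finset.range (p+1), distCompl Ω (β (u j)) := by
    have hfull : ∀ j : ℕ, j < p → u (j+1) - u j ≤ Real.exp 1 * distCompl Ω (β (u j)) := by
      intro j hj
      have hj1 : j + 1 ≤ p := hj
      exact piece_len hΩo hΩne hUS (huIcc j hj.le) (huIcc (j+1) hj1)
        (humono j (j+1) (by omega) hj1) (le_of_eq (hpieceInt j hj))
    have hlast : L - u p ≤ Real.exp 1 * distCompl Ω (β (u p)) :=
      piece_len hΩo hΩne hUS (huIcc p le_rfl) hLmem (huIcc p le_rfl).2 hplast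
    have htel : ∑ j ∈ Finset.range p, (u (j+1) - u j) = u p - u 0 := Finset.sum_range_sub u p
    calc L = (L - u p) + (u p - u 0) := by rw [hu0]; ring
      _ = (L - u p) + ∑ j ∈ Finset.range p, (u (j+1) - u j) := by rw [htel]
      _ ≤ Real.exp 1 * distCompl Ω (β (u p)) +
          ∑ j ∈ Finset.range p, Real.exp 1 * distCompl Ω (β (u j)) :=
          add_le_add hlast (Finset.sum_le_sum fun j hj => hfull j (Finset.mem_range.1 hj))
      _ = Real.exp 1 * ∑ j ∈ Finset.range (p+1), distCompl Ω (β (u j)) := by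
          rw [Finset.sum_range_succ, mul_add, Finset.mul_sum]; ring
  -- qh distances between marked points
  have hqd : ∀ i j : ℕ, i < j → j ≤ p → qhDist Ω (β (u i)) (β (u j)) = (j:ℝ) - i := by
    intro i j hij hj
    have hi : i ≤ p := le_trans hij.le hj
    have h1 := hFadd (u i) (u j) (huIcc i hi) (huIcc j hj) (humono i j hij.le hj)
    rw [huF i hi, huF j hj] at h1
    rw [← hgeo (u i) (huIcc i hi) (u j) (huIcc j hj) (humono i j hij.le hj)]
    linarith
  have hsepd : ∀ i j : ℕ, i ≠ j → i ≤ p → j ≤ p →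
      (1 - Real.exp (-1)) * distCompl Ω (β (u i)) ≤ dist (β (u i)) (β (u j)) := by
    intro i j hne hi hj
    rcases lt_or_gt_of_ne hne with hlt | hgt
    · apply sep_left hX hΩo hΩne (hUS.mem (u i) (huIcc i hi))
      rw [hqd i j hlt hj]
      have : (i:ℝ) + 1 ≤ j := by exact_mod_cast hlt
      linarith
    · have h1 : 1 ≤ qhDist Ω (β (u j)) (β (u i)) := by
        rw [hqd j i hgt hi]
        have : (j:ℝ) + 1 ≤ i := by exact_mod_cast hgt
        linarith
      have := sep_right hX hΩo hΩne (hUS.mem (u i) (huIcc i hi)) h1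
      rwa [dist_comm (β (u j))] at this
  have hexpneg : Real.exp (-1) < 1 := Real.exp_lt_one_iff.2 (by norm_num)
  have hinj : ∀ i j : ℕ, i ≤ p → j ≤ p → β (u i) = β (u j) → i = j := by
    intro i j hi hj heq
    by_contra hne
    have h1 := hsepd i j hne hi hj
    rw [heq, dist_self] at h1
    have h2 := hdpos (u j) (huIcc j hj)
    nlinarith [mul_pos (by linarith : (0:ℝ) < 1 - Real.exp (-1)) h2]
  -- scales
  set sc : ℕ → ℕ := fun j => ⌊Real.logb 2 (D / distCompl Ω (β (u j)))⌋₊ with hsc_def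
  have hsc1 : ∀ j : ℕ, j ≤ p → distCompl Ω (β (u j)) ≤ D / 2 ^ (sc j) := by
    intro j hj
    have hdj := hdpos (u j) (huIcc j hj)
    have hr : 1 ≤ D / distCompl Ω (β (u j)) :=
      (one_le_div hdj).2 (hmax (u j) (huIcc j hj))
    have h1 : (2:ℝ) ^ (sc j) ≤ D / distCompl Ω (β (u j)) := by
      calc (2:ℝ) ^ (sc j) = (2:ℝ) ^ ((sc j : ℕ) : ℝ) := (Real.rpow_natCast 2 (sc j)).symm
        _ ≤ (2:ℝ) ^ (Real.logb 2 (D / distCompl Ω (β (u j)))) :=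
            Real.rpow_le_rpow_of_exponent_le one_le_two
              (Nat.floor_le (Real.logb_nonneg one_lt_two hr))
        _ = D / distCompl Ω (β (u j)) :=
            Real.rpow_logb two_pos (by norm_num) (by positivity)
    rw [le_div_iff₀ hdj] at h1
    rw [le_div_iff₀ (by positivity)]
    linarith
  have hsc2 : ∀ j : ℕ, j ≤ p → D / 2 ^ (sc j + 1) < distCompl Ω (β (u j)) := by
    intro j hj
    have hdj := hdpos (u j) (huIcc j hj)
    have h1 : D / distCompl Ω (β (u j)) < (2:ℝ) ^ (sc j + 1) := by
      calc D / distCompl Ω (β (u j)) =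
            (2:ℝ) ^ (Real.logb 2 (D / distCompl Ω (β (u j)))) :=
            (Real.rpow_logb two_pos (by norm_num) (by positivity)).symm
        _ < (2:ℝ) ^ (((sc j + 1 : ℕ)) : ℝ) := by
            apply Real.rpow_lt_rpow_of_exponent_lt one_lt_two
            push_cast
            exact Nat.lt_floor_add_one _
        _ = (2:ℝ) ^ (sc j + 1) := Real.rpow_natCast 2 (sc j + 1)
    rw [div_lt_iff₀ hdj] at h1
    rw [div_lt_iff₀ (by positivity)]
    linarith
  set c₁ := 1 - Real.exp (-1) with hc₁_def
  have hc₁pos : 0 < c₁ := by rw [hc₁_def]; linarith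
  have hc₁lt : c₁ < 1 := by
    rw [hc₁_def]; have := Real.exp_pos (-1); linarith
  have heinv : Real.exp (-1) ≤ 0.37 := by
    have hee : Real.exp (-1) * Real.exp 1 = 1 := by rw [← Real.exp_add]; norm_num
    nlinarith [Real.exp_one_gt_d9, Real.exp_pos (-1)]
  have he2 : Real.exp 2 = Real.exp 1 * Real.exp 1 := by rw [← Real.exp_add]; norm_num
  set m : ℕ := ⌊Real.logb 2 (4*μ₁/c₁)⌋₊ with hm_def
  have hmc1 : 1 ≤ 4*μ₁/c₁ := by
    rw [le_div_iff₀ hc₁pos]; nlinarith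
  have hm1 : 4*μ₁/c₁ ≤ 2 ^ (m+1) := by
    calc 4*μ₁/c₁ = (2:ℝ) ^ (Real.logb 2 (4*μ₁/c₁)) :=
          (Real.rpow_logb two_pos (by norm_num) (by positivity)).symm
      _ ≤ (2:ℝ) ^ (((m + 1 : ℕ)) : ℝ) := by
          apply Real.rpow_le_rpow_of_exponent_le one_le_two
          push_cast
          exact (Nat.lt_floor_add_one _).le
      _ = (2:ℝ) ^ (m + 1) := Real.rpow_natCast 2 (m+1)
  have hmK : ((m:ℝ) + 1) ≤ Real.logb 2 (4 * Real.exp 2 * μ₁ * (1 + μ₁)) := by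
    have h1 : (m:ℝ) ≤ Real.logb 2 (4*μ₁/c₁) :=
      Nat.floor_le (Real.logb_nonneg one_lt_two hmc1)
    have h2 : Real.logb 2 (4*μ₁/c₁) + 1 = Real.logb 2 (2 * (4*μ₁/c₁)) := by
      rw [Real.logb_mul (by norm_num) (by positivity), Real.logb_self_eq_one one_lt_two]
      ring
    have h3 : Real.logb 2 (2 * (4*μ₁/c₁)) ≤ Real.logb 2 (4 * Real.exp 2 * μ₁ * (1 + μ₁)) := by
      apply Real.logb_le_logb_of_le one_lt_two (by positivity)
      have he : 2 * (4*μ₁/c₁) = 8*μ₁/c₁ := by ring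
      have hc63 : (0.63:ℝ) ≤ c₁ := by rw [hc₁_def]; linarith
      have he72 : (7.38:ℝ) ≤ Real.exp 2 := by
        rw [he2]; nlinarith [Real.exp_one_gt_d9]
      rw [he, div_le_iff₀ hc₁pos]
      calc 8*μ₁ ≤ 4 * 7.38 * μ₁ * (1 + 1) * 0.63 := by linarith
        _ ≤ 4 * Real.exp 2 * μ₁ * (1 + μ₁) * c₁ := by gcongr <;> linarith
    linarith
  set N := ⌊Q ^ Real.logb 2 (4 * Real.exp 2 * μ₁ * (1 + μ₁))⌋₊ with hN_def
  set A : ℕ → Finset ℕ := fun i => (Finset.range (p+1)).filter (fun j => sc j = i) with hA_def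
  have hAcard : ∀ i : ℕ, (A i).card ≤ N := by
    intro i
    have h2ipos : (0:ℝ) < D / 2^i := by positivity
    set r : ℝ := 2*μ₁*(D/2^i) with hr_def
    set T : Finset X := (A i).image (fun j => β (u j)) with hT_def
    have hjle : ∀ j ∈ A i, j ≤ p := by
      intro j hj
      have := (Finset.mem_filter.1 hj).1
      rw [Finset.mem_range] at this
      omega
    have hsci : ∀ j ∈ A i, sc j = i := fun j hj => (Finset.mem_filter.1 hj).2
    have hTcard : T.card = (A i).card := Finset.card_image_of_injOn (by
      intro a ha b hb heq
      exact hinj a b (hjle a ha) (hjle b hb) heq)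
    have hball : ↑T ⊆ Metric.ball (β 0) r := by
      intro z hz
      rw [hT_def, Finset.coe_image, Set.mem_image] at hz
      obtain ⟨j, hj, rfl⟩ := hz
      rw [Finset.mem_coe] at hj
      have hjp := hjle j hj
      have h1 := hcone (u j) (huIcc j hjp)
      have h2 := hsc1 j hjp
      rw [hsci j hj] at h2
      rw [Metric.mem_ball, dist_comm]
      calc dist (β 0) (β (u j)) ≤ μ₁ * distCompl Ω (β (u j)) := h1
        _ ≤ μ₁ * (D/2^i) := by nlinarith [hdpos (u j) (huIcc j hjp)]
        _ < r := by rw [hr_def]; nlinarith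
    have hsep : ∀ a ∈ T, ∀ b ∈ T, a ≠ b → r / 2^(m+1) ≤ dist a b := by
      intro a ha b hb hab
      rw [hT_def, Finset.mem_image] at ha hb
      obtain ⟨j, hj, rfl⟩ := ha
      obtain ⟨j', hj', rfl⟩ := hb
      have hjj' : j ≠ j' := fun h => hab (by rw [h])
      have hd1 := hsepd j j' hjj' (hjle j hj) (hjle j' hj')
      have h2 := hsc2 j (hjle j hj)
      rw [hsci j hj] at h2
      have key : r / 2^(m+1) ≤ c₁ * (D / 2^(i+1)) := by
        have h4 : 4*μ₁ ≤ c₁ * 2^(m+1) := by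
          rw [div_le_iff₀ hc₁pos] at hm1
          linarith
        have h2m : (0:ℝ) < (2:ℝ)^(m+1) := by positivity
        rw [hr_def, div_le_iff₀ h2m]
        have expand : c₁ * (D / 2^(i+1)) * 2^(m+1) = (c₁ * 2^(m+1)) * D / (2^i * 2) := by
          rw [pow_succ]; ring
        rw [expand, le_div_iff₀ (by positivity)]
        have hsimp : 2*μ₁*(D/2^i)*(2^i*2) = 4*μ₁*D := by
          field_simp
          ring
        rw [hsimp]
        nlinarith
      calc r / 2^(m+1) ≤ c₁ * (D/2^(i+1)) := key
        _ ≤ c₁ * distCompl Ω (β (u j)) :=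
            mul_le_mul_of_nonneg_left h2.le hc₁pos.le
        _ ≤ dist (β (u j)) (β (u j')) := by rw [hc₁_def]; exact hd1
    have hQbound := doubling_iter hQ hQD m (β 0) r T hball hsep
    have hQK : (Q:ℝ)^(m+1) ≤ Q ^ Real.logb 2 (4 * Real.exp 2 * μ₁ * (1 + μ₁)) := by
      calc (Q:ℝ)^(m+1) = Q ^ (((m+1 : ℕ)) : ℝ) := (Real.rpow_natCast Q (m+1)).symm
        _ ≤ _ := Real.rpow_le_rpow_of_exponent_le hQ.le (by push_cast; exact hmK)
    rw [← hTcard]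
    apply Nat.le_floor
    exact le_trans hQbound hQK
  set I' := (Finset.range (p+1)).image sc with hI_def
  have hmaps : ∀ j ∈ Finset.range (p+1), sc j ∈ I' := fun j hj => Finset.mem_image_of_mem sc hj
  have hjle' : ∀ i : ℕ, ∀ j ∈ (Finset.range (p+1)).filter (fun j => sc j = i), j ≤ p := by
    intro i j hj
    have := (Finset.mem_filter.1 hj).1
    rw [Finset.mem_range] at this
    omega
  have hgeom : ∑ i ∈ I', ((1:ℝ)/2)^i ≤ 2 := by
    set n := (I'.sup id) + 1 with hn_def
    have hsub : I' ⊆ Finset.range n := by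
      intro i hi
      rw [Finset.mem_range, hn_def]
      have := Finset.le_sup (f := id) hi
      simp only [id] at this
      omega
    calc ∑ i ∈ I', ((1:ℝ)/2)^i ≤ ∑ i ∈ Finset.range n, ((1:ℝ)/2)^i :=
        Finset.sum_le_sum_of_subset_of_nonneg hsub (fun i _ _ => by positivity)
      _ ≤ 2 := by
        rw [geom_sum_eq (by norm_num) n]
        have h0 : (0:ℝ) ≤ ((1:ℝ)/2)^n := by positivity
        have h12 : (((1:ℝ)/2)^n - 1)/((1:ℝ)/2 - 1) = 2 - 2*((1:ℝ)/2)^n := by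
          field_simp
          ring
        rw [h12]
        linarith
  have hsum1 : ∑ j ∈ Finset.range (p+1), distCompl Ω (β (u j)) ≤ 2 * N * D := by
    rw [← Finset.sum_fiberwise_of_maps_to hmaps (fun j => distCompl Ω (β (u j)))]
    have hinner : ∀ i ∈ I',
        (∑ j ∈ (Finset.range (p+1)).filter (fun j => sc j = i), distCompl Ω (β (u j)))
          ≤ (N:ℝ) * (D/2^i) := by
      intro i _
      have hbound : ∀ j ∈ (Finset.range (p+1)).filter (fun j => sc j = i),
          distCompl Ω (β (u j)) ≤ D/2^i := by
        intro j hj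
        have h1 := hsc1 j (hjle' i j hj)
        rw [(Finset.mem_filter.1 hj).2] at h1
        exact h1
      calc (∑ j ∈ (Finset.range (p+1)).filter (fun j => sc j = i), distCompl Ω (β (u j)))
          ≤ ((Finset.range (p+1)).filter (fun j => sc j = i)).card • (D/2^i) :=
            Finset.sum_le_card_nsmul _ _ _ hbound
        _ = (((Finset.range (p+1)).filter (fun j => sc j = i)).card : ℝ) * (D/2^i) := by
            rw [nsmul_eq_mul]
        _ ≤ (N:ℝ) * (D/2^i) := by
            apply mul_le_mul_of_nonneg_right _ (by positivity)
            exact_mod_cast hAcard i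
    calc (∑ i ∈ I', ∑ j ∈ (Finset.range (p+1)).filter (fun j => sc j = i),
            distCompl Ω (β (u j)))
        ≤ ∑ i ∈ I', (N:ℝ) * (D/2^i) := Finset.sum_le_sum hinner
      _ = (N:ℝ) * D * ∑ i ∈ I', ((1:ℝ)/2)^i := by
          rw [Finset.mul_sum]
          apply Finset.sum_congr rfl
          intro i _
          rw [one_div, inv_pow]
          ring
      _ ≤ (N:ℝ) * D * 2 := by
          apply mul_le_mul_of_nonneg_left hgeom (by positivity)
      _ = 2 * N * D := by ring
  have hN0 : (0:ℝ) ≤ (N:ℝ) := Nat.cast_nonneg N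
  have hclaim1 : L ≤ (11 / 9 * Real.exp 2 * μ₁ * ((N:ℝ) + 1)) * D := by
    have h1 : L ≤ Real.exp 1 * (2*(N:ℝ)*D) :=
      le_trans hlen (mul_le_mul_of_nonneg_left hsum1 (Real.exp_pos 1).le)
    exact le_trans h1 (final1_aux μ₁ (N:ℝ) D hμ hN0 hD)
  -- claim 2
  have hqdeq : qhDist Ω (β 0) (β L) = κ := by
    rw [← hgeo 0 h0mem L hLmem hL0]
  have hκlt : κ < (p:ℝ) + 1 := by
    have := Nat.lt_floor_add_one κ
    rw [← hp_def] at this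
    exact_mod_cast this
  have hcnat : p + 1 ≤ I'.card * N := by
    have h1 : (Finset.range (p+1)).card =
        ∑ i ∈ I', ((Finset.range (p+1)).filter (fun j => sc j = i)).card :=
      Finset.card_eq_sum_card_fiberwise hmaps
    rw [Finset.card_range] at h1
    calc p + 1 = ∑ i ∈ I', ((Finset.range (p+1)).filter (fun j => sc j = i)).card := h1
      _ ≤ ∑ _i ∈ I', N := Finset.sum_le_sum (fun i _ => hAcard i)
      _ = I'.card * N := by rw [Finset.sum_const, smul_eq_mul]
  have hIstar0 : 1 ≤ (1+μ₁)*D/d₀ := by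
    rw [le_div_iff₀ hd₀]
    nlinarith
  have hIcard : (I'.card : ℝ) ≤ Real.logb 2 ((1+μ₁)*D/d₀) + 1 := by
    have hIsub : I' ⊆ Finset.range (⌊Real.logb 2 ((1+μ₁)*D/d₀)⌋₊ + 1) := by
      intro i hi
      rw [hI_def, Finset.mem_image] at hi
      obtain ⟨j, hj, rfl⟩ := hi
      rw [Finset.mem_range, Nat.lt_succ_iff]
      apply Nat.le_floor
      have hjp : j ≤ p := by rw [Finset.mem_range] at hj; omega
      have hdj := hdpos (u j) (huIcc j hjp)
      have h2 : (2:ℝ)^(sc j) ≤ (1+μ₁)*D/d₀ := by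
        have ha := hsc1 j hjp
        have hb := hlow (u j) (huIcc j hjp)
        rw [le_div_iff₀ (by positivity : (0:ℝ) < (2:ℝ)^(sc j))] at ha
        rw [le_div_iff₀ hd₀]
        nlinarith [pow_pos (two_pos (α := ℝ)) (sc j),
          mul_le_mul_of_nonneg_right hb (le_of_lt (pow_pos (two_pos (α := ℝ)) (sc j))),
          mul_le_mul_of_nonneg_left ha (by linarith : (0:ℝ) ≤ 1+μ₁)]
      rw [Real.le_logb_iff_rpow_le one_lt_two (by positivity)]
      rw [Real.rpow_natCast]
      exact h2
    have h1 := Finset.card_le_card hIsub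
    rw [Finset.card_range] at h1
    have h2 : (⌊Real.logb 2 ((1+μ₁)*D/d₀)⌋₊ : ℝ) ≤ Real.logb 2 ((1+μ₁)*D/d₀) :=
      Nat.floor_le (Real.logb_nonneg one_lt_two hIstar0)
    calc (I'.card : ℝ) ≤ (⌊Real.logb 2 ((1+μ₁)*D/d₀)⌋₊ : ℝ) + 1 := by exact_mod_cast h1
      _ ≤ Real.logb 2 ((1+μ₁)*D/d₀) + 1 := by linarith
  have hT0 : 0 ≤ Real.log (D/d₀) := Real.log_nonneg ((one_le_div hd₀).2 hd₀D)
  have hlμ : Real.log (1+μ₁) ≤ μ₁ := by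
    have := Real.log_le_sub_one_of_pos (by linarith : (0:ℝ) < 1+μ₁)
    linarith
  have hlμ0 : 0 ≤ Real.log (1+μ₁) := Real.log_nonneg (by linarith)
  have hl3 : 1 ≤ Real.log 3 := by
    rw [show (1:ℝ) = Real.log (Real.exp 1) from (Real.log_exp 1).symm]
    apply Real.log_le_log (Real.exp_pos 1)
    nlinarith [Real.exp_one_lt_d9]
  have hsplit1 : Real.logb 2 ((1+μ₁)*D/d₀) =
      (Real.log (1+μ₁) + Real.log (D/d₀)) / Real.log 2 := by
    rw [Real.logb, mul_div_assoc, Real.log_mul (by positivity) (by positivity)]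
  have hsplit2 : Real.log (3*D/d₀) = Real.log 3 + Real.log (D/d₀) := by
    rw [mul_div_assoc, Real.log_mul (by norm_num) (by positivity)]
  have hfinal2 : (Real.logb 2 ((1+μ₁)*D/d₀) + 1) * (N:ℝ) ≤
      (11 / 9 * Real.exp 2 * μ₁ * ((N:ℝ) + 1)) * Real.log (3*D/d₀) := by
    rw [hsplit1, hsplit2]
    exact final2_aux μ₁ (Real.log (D/d₀)) (N:ℝ) (Real.log (1+μ₁)) hμ hT0 hN0 hlμ0 hlμ
  have hclaim2 : qhDist Ω (β 0) (β L) ≤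
      (11 / 9 * Real.exp 2 * μ₁ * ((N:ℝ) + 1)) * Real.log (3 * D / d₀) := by
    calc qhDist Ω (β 0) (β L) = κ := hqdeq
      _ ≤ (p:ℝ) + 1 := hκlt.le
      _ ≤ ((I'.card * N : ℕ) : ℝ) := by exact_mod_cast hcnat
      _ = (I'.card : ℝ) * (N:ℝ) := by push_cast; ring
      _ ≤ (Real.logb 2 ((1+μ₁)*D/d₀) + 1) * (N:ℝ) :=
          mul_le_mul_of_nonneg_right hIcard hN0
      _ ≤ (11 / 9 * Real.exp 2 * μ₁ * ((N:ℝ) + 1)) * Real.log (3*D/d₀) := hfinal2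
  exact ⟨hclaim1, hclaim2⟩
end
end

section
/- Let Ω be a proper subdomain of a length space and suppose a > 1 and x₁,x₂ ∈ Ω with d(x₁,x₂) ≤ a⁻¹·d_Ω(x₁). Then σ_Ω(x₁,x₂) ≤ (10a/(9(a−1)))·e^{(10/9)(a−1)⁻¹}·d(x₁,x₂), i.e., the inner distance between x₁ and x₂ in Ω is at most a constant (depending only on a) times their distance. -/
open Metric Set Real MeasureTheory

noncomputable section

variable {X : Type*} [MetricSpace X]

/-- Lemma 2.1, second part: inner distance between nearby points of a
proper subdomain of a length space. -/
theorem innerDist_le_of_close (hX : IsLengthSpace X) (Ω : Set X)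
    (hΩ : IsProperSubdomain Ω) (a : ℝ) (ha : 1 < a) (x₁ x₂ : X)
    (hx₁ : x₁ ∈ Ω) (hx₂ : x₂ ∈ Ω)
    (hd : dist x₁ x₂ ≤ a⁻¹ * distCompl Ω x₁) :
    innerDist Ω x₁ x₂ ≤
      (10 * a / (9 * (a - 1))) * Real.exp ((10 / 9) * (a - 1)⁻¹) * dist x₁ x₂ := by
  obtain ⟨hopen, hconn, hne⟩ := hΩ
  have hcne : (Ωᶜ : Set X).Nonempty := by
    rw [Set.nonempty_compl]; exact hne
  have hD0 : 0 < distCompl Ω x₁ :=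
    ((isClosed_compl_iff.mpr hopen).notMem_iff_infDist_pos hcne).mp (by simpa using hx₁)
  have ha0 : (0:ℝ) < a := lt_trans one_pos ha
  have hdd : dist x₁ x₂ < distCompl Ω x₁ := by
    refine lt_of_le_of_lt hd ?_
    have : a⁻¹ < 1 := inv_lt_one_of_one_lt₀ ha
    nlinarith
  have hbdd : BddBelow (Set.range fun p :
      {p : (ℝ → X) × ℝ // IsUnitSpeedIn Ω p.1 p.2 ∧ p.1 0 = x₁ ∧ p.1 p.2 = x₂} => p.1.2) := by
    refine ⟨0, ?_⟩
    rintro r ⟨p, rfl⟩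
    exact p.2.1.nonneg
  have hle : innerDist Ω x₁ x₂ ≤ dist x₁ x₂ := by
    refine le_of_forall_pos_le_add ?_
    intro ε hε
    set ε' := min ε ((distCompl Ω x₁ - dist x₁ x₂)/2) with hε'
    have hε'0 : 0 < ε' := lt_min hε (by linarith)
    obtain ⟨γ, L, hγ, h0, hL, hlen⟩ := hX x₁ x₂ ε' hε'0
    have hε'le : ε' ≤ (distCompl Ω x₁ - dist x₁ x₂)/2 := min_le_right _ _
    have hLD : L < distCompl Ω x₁ := by linarith
    have hmem : ∀ t ∈ Set.Icc (0:ℝ) L, γ t ∈ Ω := by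
      intro t ht
      by_contra hc
      have h0mem : (0:ℝ) ∈ Set.Icc (0:ℝ) L := ⟨le_refl 0, hγ.nonneg⟩
      have h1 : edist (γ 0) (γ t) ≤ eVariationOn γ (Set.Icc 0 L) :=
        eVariationOn.edist_le γ h0mem ht
      rw [hγ.unitSpeed 0 h0mem L ⟨hγ.nonneg, le_refl L⟩ hγ.nonneg] at h1
      have hdist : dist (γ 0) (γ t) ≤ L - 0 := by
        rw [edist_dist] at h1
        exact (ENNReal.ofReal_le_ofReal_iff (by linarith [hγ.nonneg])).mp h1
      have h2 : distCompl Ω x₁ ≤ dist x₁ (γ t) := Metric.infDist_le_dist_of_mem hc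
      rw [h0] at hdist
      linarith
    have hunit : IsUnitSpeedIn Ω γ L := ⟨hγ.nonneg, hmem, hγ.unitSpeed⟩
    have hi : innerDist Ω x₁ x₂ ≤ L :=
      ciInf_le hbdd (⟨(γ, L), hunit, h0, hL⟩ :
        {p : (ℝ → X) × ℝ // IsUnitSpeedIn Ω p.1 p.2 ∧ p.1 0 = x₁ ∧ p.1 p.2 = x₂})
    have : ε' ≤ ε := min_le_left _ _
    linarith
  have hinv : (0:ℝ) ≤ (a - 1)⁻¹ := inv_nonneg.mpr (by linarith)
  have h2 : (1:ℝ) ≤ Real.exp ((10 / 9) * (a - 1)⁻¹) :=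
    Real.one_le_exp (by positivity)
  have h1 : (1:ℝ) ≤ 10 * a / (9 * (a - 1)) := by
    rw [le_div_iff₀ (by nlinarith)]
    nlinarith
  have hC1 : 1 ≤ (10 * a / (9 * (a - 1))) * Real.exp ((10 / 9) * (a - 1)⁻¹) := by
    nlinarith
  calc innerDist Ω x₁ x₂ ≤ dist x₁ x₂ := hle
    _ = 1 * dist x₁ x₂ := (one_mul _).symm
    _ ≤ (10 * a / (9 * (a - 1))) * Real.exp ((10 / 9) * (a - 1)⁻¹) * dist x₁ x₂ :=
        mul_le_mul_of_nonneg_right hC1 dist_nonneg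
end
end
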